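/- arXiv:math/0506434 — 9 statements merged into one kernel-verified Lean document; each statement's English description precedes it below -/
import Mathlib

section
/- Let Γ : ℝ₊ⁿ → ℝ₊ⁿ be a monotone operator of the form Γ(s)_i = Σ_j γ_{ij}(s_j) where each γ_{ij} is either identically zero or of class K (continuous, strictly increasing, vanishing at 0), with γ_{ii} ≡ 0, and let D(s)_i = s_i + α_i(s_i) with each α_i of class K_∞. If (Γ ∘ D)(s) ≱ s for all s ∈ ℝ₊ⁿ \ {0}, then there exists a function φ of class K_∞ such that for all w, v ∈ ℝ₊ⁿ, the inequality w − Γ(w) ≤ v (componentwise) implies ‖w‖_max ≤ φ(‖v‖_max). -/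
open scoped NNReal

/-- A function `γ : ℝ₊ → ℝ₊` is of class `K` if it is continuous, strictly increasing
and vanishes at `0`. -/
def ClassK (γ : ℝ≥0 → ℝ≥0) : Prop :=
  Continuous γ ∧ StrictMono γ ∧ γ 0 = 0

/-- A function is of class `K∞` if it is of class `K` and unbounded. -/
def ClassKInf (γ : ℝ≥0 → ℝ≥0) : Prop :=
  ClassK γ ∧ ∀ M : ℝ≥0, ∃ r : ℝ≥0, M < γ r

/-!
Write `b i r = α i⁻¹ r + r`. If `w ≤ Γ w + r` holds on the coordinates of a nonempty set `S`,
put `s = (id + α)⁻¹ w` on `S` and `s = 0` elsewhere, so that `D s = w` on `S`. The small-gain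
condition gives a coordinate `i` with `Γ (D s) i < s i`; then `i ∈ S`, and
`s i + α i (s i) = w i ≤ Γ (D s) i + r < s i + r`, so `α i (s i) < r` and `w i ≤ b i r`.
Feeding this bound on `w i` into the remaining inequalities as an extra input leaves the same
problem on `S \ {i}`, and induction on `|S|` bounds every coordinate by a continuous
nondecreasing function of `r` vanishing at `0`; adding `r` to it makes it of class `K∞`.
-/

/-- Class `K` relaxed to nondecreasing, so that it also contains `0` and the bounds built
below. -/
structure IsGain (f : ℝ≥0 → ℝ≥0) : Prop where
  monotone : Monotone f
  continuous : Continuous f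
  map_zero : f 0 = 0

namespace IsGain

theorem zero : IsGain 0 :=
  ⟨monotone_const, continuous_const, rfl⟩

theorem id : IsGain id :=
  ⟨monotone_id, continuous_id, rfl⟩

theorem add {f g : ℝ≥0 → ℝ≥0} (hf : IsGain f) (hg : IsGain g) : IsGain fun x => f x + g x :=
  ⟨hf.monotone.add hg.monotone, hf.continuous.add hg.continuous, by simp [hf.map_zero, hg.map_zero]⟩

theorem comp {f g : ℝ≥0 → ℝ≥0} (hf : IsGain f) (hg : IsGain g) : IsGain (f ∘ g) :=
  ⟨hf.monotone.comp hg.monotone, hf.continuous.comp hg.continuous,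
    by simp [hf.map_zero, hg.map_zero]⟩

theorem sum {ι : Type*} (s : Finset ι) {f : ι → ℝ≥0 → ℝ≥0} (hf : ∀ i ∈ s, IsGain (f i)) :
    IsGain fun x => ∑ i ∈ s, f i x := by
  induction s using Finset.cons_induction with
  | empty => exact zero
  | cons a s _ ih =>
    simp only [Finset.sum_cons]
    exact (hf a (Finset.mem_cons_self a s)).add (ih fun i hi => hf i (Finset.mem_cons_of_mem hi))

theorem classKInf_add_self {f : ℝ≥0 → ℝ≥0} (hf : IsGain f) : ClassKInf fun x => x + f x := by
  refine ⟨⟨continuous_id.add hf.continuous, strictMono_id.add_monotone hf.monotone,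
    by simp [hf.map_zero]⟩, fun M => ⟨M + 1, ?_⟩⟩
  calc M < M + 1 := lt_add_one M
    _ ≤ M + 1 + f (M + 1) := le_self_add

end IsGain

theorem ClassK.isGain {f : ℝ≥0 → ℝ≥0} (hf : ClassK f) : IsGain f :=
  ⟨hf.2.1.monotone, hf.1, hf.2.2⟩

theorem OrderIso.isGain (e : ℝ≥0 ≃o ℝ≥0) : IsGain e :=
  ⟨e.monotone, e.continuous, by simpa only [bot_eq_zero'] using e.map_bot⟩

namespace ClassKInf

theorem surjective {f : ℝ≥0 → ℝ≥0} (hf : ClassKInf f) : Function.Surjective f := by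
  intro y
  obtain ⟨r, hr⟩ := hf.2 y
  have hy : y ∈ Set.Icc (f 0) (f r) := ⟨by simp [hf.1.2.2], hr.le⟩
  obtain ⟨x, -, hx⟩ := intermediate_value_Icc (zero_le (a := r)) hf.1.1.continuousOn hy
  exact ⟨x, hx⟩

noncomputable def orderIso {f : ℝ≥0 → ℝ≥0} (hf : ClassKInf f) : ℝ≥0 ≃o ℝ≥0 :=
  StrictMono.orderIsoOfSurjective f hf.1.2.1 hf.surjective

@[simp]
theorem coe_orderIso {f : ℝ≥0 → ℝ≥0} (hf : ClassKInf f) : ⇑hf.orderIso = f :=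
  rfl

end ClassKInf

section SmallGain

variable {ι : Type*} [Fintype ι] {γ : ι → ι → ℝ≥0 → ℝ≥0}

def GainIneqOn (γ : ι → ι → ℝ≥0 → ℝ≥0) (S : Finset ι) (r : ℝ≥0) (w : ι → ℝ≥0) : Prop :=
  ∀ i ∈ S, w i ≤ ∑ j ∈ S, γ i j (w j) + r

theorem GainIneqOn.erase [DecidableEq ι] (hγ : ∀ i j, Monotone (γ i j)) {S : Finset ι} {r c : ℝ≥0}
    {w : ι → ℝ≥0} (hw : GainIneqOn γ S r w) {i₀ : ι} (hi₀ : i₀ ∈ S) (hc : w i₀ ≤ c) :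
    GainIneqOn γ (S.erase i₀) (r + ∑ j, γ j i₀ c) w := by
  intro k hk
  have hinput : γ k i₀ (w i₀) ≤ ∑ j, γ j i₀ c :=
    (hγ k i₀ hc).trans
      (Finset.single_le_sum (fun j _ => zero_le (a := γ j i₀ c)) (Finset.mem_univ k))
  calc w k ≤ ∑ l ∈ S, γ k l (w l) + r := hw k (Finset.mem_of_mem_erase hk)
    _ = ∑ l ∈ S.erase i₀, γ k l (w l) + (γ k i₀ (w i₀) + r) := by
      rw [← Finset.sum_erase_add _ _ hi₀, add_assoc]
    _ ≤ ∑ l ∈ S.erase i₀, γ k l (w l) + (r + ∑ j, γ j i₀ c) := by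
      rw [add_comm (γ k i₀ (w i₀))]
      gcongr

theorem exists_le_of_gainIneqOn [DecidableEq ι] {α : ι → ℝ≥0 → ℝ≥0} (hα : ∀ i, ClassKInf (α i))
    (hsg : ∀ s : ι → ℝ≥0, s ≠ 0 → ∃ i, ∑ j, γ i j (s j + α j (s j)) < s i)
    {S : Finset ι} (hS : S.Nonempty) {r : ℝ≥0} {w : ι → ℝ≥0} (hw : GainIneqOn γ S r w) :
    ∃ i ∈ S, w i ≤ (hα i).orderIso.symm r + r := by
  let T i := (hα i).1.isGain.classKInf_add_self.orderIso
  set s : ι → ℝ≥0 := fun j => if j ∈ S then (T j).symm (w j) else 0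
  have hDs : ∀ j ∈ S, s j + α j (s j) = w j := fun j hj => by
    simp only [s, if_pos hj]
    exact (T j).apply_symm_apply (w j)
  by_cases hs0 : s = 0
  · obtain ⟨i, hi⟩ := hS
    refine ⟨i, hi, ?_⟩
    rw [← hDs i hi, hs0, Pi.zero_apply, (hα i).1.2.2, add_zero]
    exact zero_le
  obtain ⟨i, hi⟩ := hsg s hs0
  have hiS : i ∈ S := by
    by_contra hiS
    simp [s, hiS] at hi
  have hαi : α i (s i) < r := by
    refine lt_of_add_lt_add_left (a := s i) ?_
    calc s i + α i (s i) = w i := hDs i hiS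
      _ ≤ ∑ j ∈ S, γ i j (s j + α j (s j)) + r := by
        rw [Finset.sum_congr rfl fun j hj => by rw [hDs j hj]]
        exact hw i hiS
      _ ≤ ∑ j, γ i j (s j + α j (s j)) + r := by
        gcongr
        exact Finset.subset_univ S
      _ < s i + r := by gcongr
  have hsi : s i < (hα i).orderIso.symm r := by
    rwa [← (hα i).orderIso.lt_iff_lt, OrderIso.apply_symm_apply, ClassKInf.coe_orderIso]
  exact ⟨i, hiS, hDs i hiS ▸ (add_lt_add hsi hαi).le⟩

/-- `b i r` bounds the coordinate that the small-gain condition singles out; the other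
coordinates then solve the inequality on one coordinate less, with input enlarged by that
coordinate's influence `∑ j, γ j i (b i r)`. -/
noncomputable def smallGainBound (γ : ι → ι → ℝ≥0 → ℝ≥0) (b : ι → ℝ≥0 → ℝ≥0) :
    ℕ → ℝ≥0 → ℝ≥0
  | 0 => 0
  | m + 1 => fun r => ∑ i, (b i r + smallGainBound γ b m (r + ∑ j, γ j i (b i r)))

theorem isGain_smallGainBound (hγ : ∀ i j, IsGain (γ i j)) {b : ι → ℝ≥0 → ℝ≥0}
    (hb : ∀ i, IsGain (b i)) (m : ℕ) : IsGain (smallGainBound γ b m) := by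
  induction m with
  | zero => exact IsGain.zero
  | succ m ih =>
    refine IsGain.sum _ fun i _ => (hb i).add (ih.comp (f := smallGainBound γ b m) ?_)
    exact IsGain.id.add (IsGain.sum _ fun j _ => (hγ j i).comp (hb i))

theorem le_smallGainBound [DecidableEq ι] (hγ : ∀ i j, Monotone (γ i j)) {b : ι → ℝ≥0 → ℝ≥0}
    (hb : ∀ (S : Finset ι) r w, S.Nonempty → GainIneqOn γ S r w → ∃ i ∈ S, w i ≤ b i r)
    (m : ℕ) {S : Finset ι} (hSm : S.card ≤ m) {r : ℝ≥0} {w : ι → ℝ≥0}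
    (hw : GainIneqOn γ S r w) : ∀ i ∈ S, w i ≤ smallGainBound γ b m r := by
  induction m generalizing S r with
  | zero => simp_all
  | succ m ih =>
    intro i hi
    obtain ⟨i₀, hi₀, hwi₀⟩ := hb S r w ⟨i, hi⟩ hw
    have hterm : b i₀ r + smallGainBound γ b m (r + ∑ j, γ j i₀ (b i₀ r)) ≤
        smallGainBound γ b (m + 1) r :=
      Finset.single_le_sum (f := fun i => b i r + smallGainBound γ b m (r + ∑ j, γ j i (b i r)))
        (fun _ _ => zero_le) (Finset.mem_univ i₀)
    refine le_trans ?_ hterm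
    by_cases hii₀ : i = i₀
    · subst hii₀
      exact hwi₀.trans le_self_add
    · have hcard : (S.erase i₀).card ≤ m := by
        rw [Finset.card_erase_of_mem hi₀]
        omega
      exact (ih hcard (hw.erase hγ hi₀ hwi₀) i (Finset.mem_erase.2 ⟨hii₀, hi⟩)).trans le_add_self

end SmallGain

theorem small_gain_bound_general (n : ℕ)
    (γ : Fin n → Fin n → (ℝ≥0 → ℝ≥0))
    (hγ : ∀ i j, ClassK (γ i j) ∨ γ i j = 0)
    (Γ : (Fin n → ℝ≥0) → (Fin n → ℝ≥0))
    (hΓ : ∀ s i, Γ s i = ∑ j, γ i j (s j))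
    (α : Fin n → (ℝ≥0 → ℝ≥0))
    (hα : ∀ i, ClassKInf (α i))
    (D : (Fin n → ℝ≥0) → (Fin n → ℝ≥0))
    (hD : ∀ s i, D s i = s i + α i (s i))
    (hsg : ∀ s : Fin n → ℝ≥0, s ≠ 0 → ¬ s ≤ Γ (D s)) :
    ∃ φ : ℝ≥0 → ℝ≥0, ClassKInf φ ∧
      ∀ w v : Fin n → ℝ≥0,
        (∀ i, w i - Γ w i ≤ v i) →
        Finset.univ.sup w ≤ φ (Finset.univ.sup v) := by
  have hγ' : ∀ i j, IsGain (γ i j) := fun i j =>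
    (hγ i j).elim ClassK.isGain fun h => h ▸ IsGain.zero
  have hsg' : ∀ s : Fin n → ℝ≥0, s ≠ 0 → ∃ i, ∑ j, γ i j (s j + α j (s j)) < s i := by
    intro s hs
    simpa [Pi.le_def, hΓ, hD] using hsg s hs
  let b i r := (hα i).orderIso.symm r + r
  have hb : ∀ i, IsGain (b i) := fun i => (hα i).orderIso.symm.isGain.add IsGain.id
  let B := smallGainBound γ b n
  refine ⟨fun r => r + B r, (isGain_smallGainBound hγ' hb n).classKInf_add_self, fun w v hwv => ?_⟩
  have hw : GainIneqOn γ Finset.univ (Finset.univ.sup v) w := fun i _ => by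
    rw [← hΓ, add_comm, ← tsub_le_iff_right]
    exact (hwv i).trans (Finset.le_sup (Finset.mem_univ i))
  refine Finset.sup_le fun i _ => le_trans ?_ le_add_self
  exact le_smallGainBound (fun i j => (hγ' i j).monotone)
    (fun _ _ _ hS hu => exists_le_of_gainIneqOn hα hsg' hS hu) n (by simp) hw i (Finset.mem_univ i)

/-- Lemma 5 of the paper: if the gain operator `Γ` composed with the robustness
operator `D` satisfies `(Γ ∘ D)(s) ≱ s` for all `s ≠ 0`, then `w − Γ(w) ≤ v` implies
a bound `‖w‖_max ≤ φ(‖v‖_max)` for some class `K∞` function `φ`. -/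
theorem small_gain_bound (n : ℕ)
    (γ : Fin n → Fin n → (ℝ≥0 → ℝ≥0))
    (hγ : ∀ i j, ClassK (γ i j) ∨ γ i j = 0)
    (hdiag : ∀ i, γ i i = 0)
    (Γ : (Fin n → ℝ≥0) → (Fin n → ℝ≥0))
    (hΓ : ∀ s i, Γ s i = ∑ j, γ i j (s j))
    (α : Fin n → (ℝ≥0 → ℝ≥0))
    (hα : ∀ i, ClassKInf (α i))
    (D : (Fin n → ℝ≥0) → (Fin n → ℝ≥0))
    (hD : ∀ s i, D s i = s i + α i (s i))
    (hsg : ∀ s : Fin n → ℝ≥0, s ≠ 0 → ¬ s ≤ Γ (D s)) :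
    ∃ φ : ℝ≥0 → ℝ≥0, ClassKInf φ ∧
      ∀ w v : Fin n → ℝ≥0,
        (∀ i, w i - Γ w i ≤ v i) →
        Finset.univ.sup w ≤ φ (Finset.univ.sup v) :=
  small_gain_bound_general n γ hγ Γ hΓ α hα D hD hsg
end

section
/- For a nonnegative square matrix Γ ∈ ℝ₊^{n×n} with ρ(Γ) < 1, there exist positive real numbers a₁,…,aₙ > 0 such that Γ·(I + diag(a₁,…,aₙ))·s ≱ s for all s ∈ ℝ₊ⁿ \ {0}. -/
/-!
Take `1 + aᵢ = c` for a constant `c > 1` with `c ρ(Γ) < 1`. Then `M = c Γ` has spectral radius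
`< 1`, so `Mᵏ → 0` by Gelfand's formula. If `s ≤ M s` with `M ≥ 0` entrywise, iterating gives
`s ≤ Mᵏ s → 0`, hence `s ≤ 0`, which for `s ≥ 0` forces `s = 0`.
-/

open Filter Topology
open scoped NNReal ENNReal

namespace spectrum

variable {𝕜 A : Type*} [NormedField 𝕜] [NormedRing A] [NormedAlgebra 𝕜 A]

theorem spectralRadius_smul (c : 𝕜) (a : A) :
    spectralRadius 𝕜 (c • a) = ‖c‖₊ * spectralRadius 𝕜 a := by
  rcases eq_or_ne c 0 with rfl | hc
  · simp
  · rw [show c • a = Units.mk0 c hc • a from rfl, spectralRadius, unit_smul_eq_smul,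
      ← Set.image_smul, spectralRadius]
    simp only [iSup_image, Units.smul_mk0, nnnorm_smul, ENNReal.coe_mul, ENNReal.mul_iSup]

theorem spectralRadius_lt_of_forall_lt_of_pos [ProperSpace 𝕜] [CompleteSpace A] {a : A}
    {r : ℝ≥0} (hr₀ : 0 < r) (hr : ∀ k ∈ spectrum 𝕜 a, ‖k‖₊ < r) : spectralRadius 𝕜 a < r := by
  rcases (spectrum 𝕜 a).eq_empty_or_nonempty with h | h
  · simpa [spectralRadius, h] using hr₀
  · exact spectralRadius_lt_of_forall_lt_of_nonempty h hr

end spectrum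

theorem tendsto_pow_atTop_nhds_zero_of_spectralRadius_lt_one {A : Type*} [NormedRing A]
    [NormedAlgebra ℂ A] [CompleteSpace A] {a : A} (h : spectralRadius ℂ a < 1) :
    Tendsto (a ^ ·) atTop (𝓝 0) := by
  obtain ⟨r, hρr, hr₁⟩ := ENNReal.lt_iff_exists_nnreal_btwn.mp h
  have hgelfand := spectrum.pow_nnnorm_pow_one_div_tendsto_nhds_spectralRadius a
  have hpow : ∀ᶠ k : ℕ in atTop, ‖a ^ k‖₊ ≤ r ^ k := by
    filter_upwards [hgelfand.eventually_lt_const hρr, eventually_gt_atTop 0] with k hk hk₀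
    rw [one_div, ENNReal.rpow_inv_lt_iff (by positivity)] at hk
    exact_mod_cast hk.le
  rw [tendsto_zero_iff_norm_tendsto_zero]
  refine squeeze_zero' (.of_forall fun k => norm_nonneg _) (hpow.mono fun k hk => ?_)
    (tendsto_pow_atTop_nhds_zero_of_lt_one r.2 (by exact_mod_cast hr₁))
  exact_mod_cast hk

theorem exists_one_lt_tendsto_pow_smul_nhds_zero_of_forall_norm_lt_one {A : Type*}
    [NormedRing A] [NormedAlgebra ℂ A] [CompleteSpace A] {a : A} (h : ∀ μ ∈ spectrum ℂ a, ‖μ‖ < 1) :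
    ∃ c : ℝ, 1 < c ∧ Tendsto (((c : ℂ) • a) ^ ·) atTop (𝓝 0) := by
  have hρ : spectralRadius ℂ a < 1 :=
    spectrum.spectralRadius_lt_of_forall_lt_of_pos one_pos fun μ hμ => mod_cast h μ hμ
  obtain ⟨r, hρr, hr₁⟩ := ENNReal.lt_iff_exists_nnreal_btwn.mp hρ
  have hr₀ : 0 < r := ENNReal.coe_pos.mp (pos_of_gt hρr)
  refine ⟨(r : ℝ)⁻¹, (one_lt_inv₀ (mod_cast hr₀)).mpr (mod_cast hr₁),
    tendsto_pow_atTop_nhds_zero_of_spectralRadius_lt_one ?_⟩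
  have hnorm : ‖(((r : ℝ)⁻¹ : ℝ) : ℂ)‖₊ = r⁻¹ := by ext; simp
  calc spectralRadius ℂ ((((r : ℝ)⁻¹ : ℝ) : ℂ) • a) = (r⁻¹ : ℝ≥0) * spectralRadius ℂ a := by
        rw [spectrum.spectralRadius_smul, hnorm]
    _ < (r⁻¹ : ℝ≥0) * r := ENNReal.mul_lt_mul_right (by simp [hr₀.ne']) ENNReal.coe_ne_top hρr
    _ = 1 := by rw [← ENNReal.coe_mul, inv_mul_cancel₀ hr₀.ne', ENNReal.coe_one]

namespace Matrix

variable {n R : Type*} [Fintype n]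

theorem mulVec_mono_of_nonneg [Semiring R] [PartialOrder R] [IsOrderedRing R] {M : Matrix n n R}
    (hM : ∀ i j, 0 ≤ M i j) {u v : n → R} (huv : u ≤ v) : M *ᵥ u ≤ M *ᵥ v :=
  fun i => dotProduct_le_dotProduct_of_nonneg_left huv (hM i)

variable [DecidableEq n]

theorem exists_one_lt_tendsto_pow_smul_nhds_zero_of_forall_norm_lt_one (A : Matrix n n ℂ)
    (h : ∀ μ ∈ spectrum ℂ A, ‖μ‖ < 1) :
    ∃ c : ℝ, 1 < c ∧ Tendsto (((c : ℂ) • A) ^ ·) atTop (𝓝 0) := by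
  -- Any Banach algebra norm will do: neither the spectrum nor the topology depends on it.
  let := Matrix.linftyOpNormedRing (n := n) (α := ℂ)
  let := Matrix.linftyOpNormedAlgebra (n := n) (R := ℂ) (α := ℂ)
  have := FiniteDimensional.complete ℂ (Matrix n n ℂ)
  exact _root_.exists_one_lt_tendsto_pow_smul_nhds_zero_of_forall_norm_lt_one h

theorem tendsto_pow_atTop_nhds_zero_of_map_ofReal {A : Matrix n n ℝ}
    (h : Tendsto ((A.map Complex.ofReal) ^ ·) atTop (𝓝 0)) : Tendsto (A ^ ·) atTop (𝓝 0) := by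
  have hre : Continuous fun B : Matrix n n ℂ => B.map Complex.re :=
    continuous_id.matrix_map Complex.continuous_re
  have hmap (k : ℕ) : (A.map Complex.ofReal ^ k).map Complex.re = A ^ k := by
    rw [show A.map Complex.ofReal ^ k = (A ^ k).map Complex.ofReal from
      (A.map_pow Complex.ofRealHom k).symm]
    ext
    simp
  simpa [Function.comp_def, hmap] using (hre.tendsto 0).comp h

theorem exists_one_lt_tendsto_pow_smul_nhds_zero_of_forall_norm_map_ofReal_lt_one
    (A : Matrix n n ℝ) (h : ∀ μ ∈ spectrum ℂ (A.map Complex.ofReal), ‖μ‖ < 1) :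
    ∃ c : ℝ, 1 < c ∧ Tendsto ((c • A) ^ ·) atTop (𝓝 0) := by
  obtain ⟨c, hc, hpow⟩ :=
    (A.map Complex.ofReal).exists_one_lt_tendsto_pow_smul_nhds_zero_of_forall_norm_lt_one h
  refine ⟨c, hc, tendsto_pow_atTop_nhds_zero_of_map_ofReal ?_⟩
  convert hpow using 3
  ext
  simp

variable [Semiring R] [PartialOrder R] [IsOrderedRing R]

theorem le_pow_mulVec_of_le_mulVec {M : Matrix n n R} (hM : ∀ i j, 0 ≤ M i j) {s : n → R}
    (hs : s ≤ M *ᵥ s) (k : ℕ) : s ≤ M ^ k *ᵥ s := by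
  induction k with
  | zero => simp
  | succ k ih =>
    calc s ≤ M *ᵥ s := hs
      _ ≤ M *ᵥ (M ^ k *ᵥ s) := mulVec_mono_of_nonneg hM ih
      _ = M ^ (k + 1) *ᵥ s := by rw [mulVec_mulVec, pow_succ']

theorem nonpos_of_le_mulVec_of_tendsto_pow [TopologicalSpace R] [IsTopologicalSemiring R]
    [OrderClosedTopology R] {M : Matrix n n R} (hM : ∀ i j, 0 ≤ M i j)
    (hpow : Tendsto (M ^ ·) atTop (𝓝 0)) {s : n → R} (hs : s ≤ M *ᵥ s) : s ≤ 0 := by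
  have hlim : Tendsto (fun k : ℕ => M ^ k *ᵥ s) atTop (𝓝 0) := by
    simpa [Function.comp_def] using
      ((continuous_id.matrix_mulVec continuous_const).tendsto 0).comp hpow
  exact ge_of_tendsto' hlim (le_pow_mulVec_of_le_mulVec hM hs)

end Matrix

/-- For a nonnegative matrix `Γ` with spectral radius `< 1` there is a diagonal
perturbation `I + diag(a)`, `a > 0`, such that `Γ (I + diag(a)) s ≱ s` for all
nonzero nonnegative `s`. -/
theorem robust_small_gain_of_spectral_radius_lt_one (n : ℕ)
    (Γ : Matrix (Fin n) (Fin n) ℝ)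
    (hΓ : ∀ i j, 0 ≤ Γ i j)
    (hρ : ∀ μ ∈ spectrum ℂ (Γ.map Complex.ofReal), ‖μ‖ < 1) :
    ∃ a : Fin n → ℝ, (∀ i, 0 < a i) ∧
      ∀ s : Fin n → ℝ, (∀ i, 0 ≤ s i) → s ≠ 0 →
        ¬ (∀ i, s i ≤ (Γ * (1 + Matrix.diagonal a)).mulVec s i) := by
  obtain ⟨c, hc, hpow⟩ :=
    Γ.exists_one_lt_tendsto_pow_smul_nhds_zero_of_forall_norm_map_ofReal_lt_one hρ
  refine ⟨fun _ => c - 1, fun _ => sub_pos.mpr hc, fun s hs₀ hs hle => hs ?_⟩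
  have hM : Γ * (1 + Matrix.diagonal fun _ => c - 1) = c • Γ := by
    ext i j
    simp [Matrix.mul_add, Matrix.mul_diagonal]
    ring
  have hMs : s ≤ (c • Γ).mulVec s := hM ▸ hle
  have hnn : ∀ i j, 0 ≤ (c • Γ) i j := fun i j => by
    simpa using mul_nonneg (zero_le_one.trans hc.le) (hΓ i j)
  exact le_antisymm (Matrix.nonpos_of_le_mulVec_of_tendsto_pow hnn hpow hMs) hs₀
end

section
/- Let Γ : ℝ₊ⁿ → ℝ₊ⁿ be a monotone map with Γ(s) ≱ s for all s ∈ ℝ₊ⁿ \ {0}. Then for every s ∈ ℝ₊ⁿ \ {0} and every positive integer k, Γ^k(s) ≱ s. -/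
open scoped NNReal

/-!
If `s ≤ f^[k] s`, the join `z` of the orbit segment `s, f s, …, f^[k-1] s` lies above `s`,
and monotonicity gives `f z ≥ f^[l+1] s` for every `l < k`; together with `f^[k] s ≥ s`
this covers every term of the join, so `z ≤ f z`.
-/

theorem Monotone.exists_ge_and_le_map_of_le_iterate {α : Type*} [SemilatticeSup α]
    {f : α → α} (hf : Monotone f) {s : α} {k : ℕ} (hk : 0 < k) (hs : s ≤ f^[k] s) :
    ∃ z, s ≤ z ∧ z ≤ f z := by
  have hne : (Finset.range k).Nonempty := Finset.nonempty_range_iff.mpr hk.ne'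
  set z := (Finset.range k).sup' hne (fun l => f^[l] s)
  have hmem : ∀ l < k, f^[l] s ≤ z := fun l hl =>
    Finset.le_sup' (fun l => f^[l] s) (Finset.mem_range.mpr hl)
  refine ⟨z, hmem 0 hk, Finset.sup'_le hne _ fun l hl => ?_⟩
  rcases l with _ | m
  · obtain ⟨j, rfl⟩ := Nat.exists_eq_add_one_of_ne_zero hk.ne'
    calc s ≤ f^[j + 1] s := hs
      _ = f (f^[j] s) := Function.iterate_succ_apply' f j s
      _ ≤ f z := hf (hmem j j.lt_add_one)
  · calc f^[m + 1] s = f (f^[m] s) := Function.iterate_succ_apply' f m s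
      _ ≤ f z := hf (hmem m (Nat.lt_of_succ_lt (Finset.mem_range.mp hl)))

/-- Step 1 of Proposition 8: if a monotone operator `Γ` satisfies `Γ(s) ≱ s` for all
`s ≠ 0`, then also `Γ^k(s) ≱ s` for all `s ≠ 0` and all `k ≥ 1`. -/
theorem iterates_no_increase (n : ℕ)
    (Γ : (Fin n → ℝ≥0) → (Fin n → ℝ≥0))
    (hmono : Monotone Γ)
    (hsg : ∀ s : Fin n → ℝ≥0, s ≠ 0 → ¬ s ≤ Γ s) :
    ∀ s : Fin n → ℝ≥0, s ≠ 0 → ∀ k : ℕ, 1 ≤ k → ¬ s ≤ Γ^[k] s := by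
  intro s hs k hk hle
  obtain ⟨z, hsz, hz⟩ := hmono.exists_ge_and_le_map_of_le_iterate hk hle
  exact hsg z (fun hz0 => hs (le_antisymm (hz0 ▸ hsz) zero_le)) hz
end

section
/- Let Γ : ℝ₊ⁿ → ℝ₊ⁿ be continuous and monotone with Γ(0)=0 and Γ(s) ≱ s for all s ≠ 0. Suppose s ∈ ℝ₊ⁿ is such that the orbit {Γ^k(s) : k ≥ 1} is bounded. Then Γ^k(s) → 0 as k → ∞. -/
open scoped NNReal
open Filter Topology

/-!
Let `z` be the componentwise `limsup` of the orbit. For every `ε > 0` the orbit eventually lies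
below `z + ε`, so by monotonicity it eventually lies below `Γ (z + ε)`, whence `z ≤ Γ (z + ε)`.
Letting `ε → 0` and using continuity gives `z ≤ Γ z`, which forces `z = 0`; a nonnegative
sequence with `limsup` zero tends to zero.
-/

variable {ι : Type*}

noncomputable def coordLimsup (x : ℕ → ι → ℝ≥0) : ι → ℝ≥0 :=
  fun i => limsup (fun k => x k i) atTop

lemma eventually_le_coordLimsup_add [Finite ι] {x : ℕ → ι → ℝ≥0}
    (hx : ∀ i, IsBoundedUnder (· ≤ ·) atTop fun k => x k i) {ε : ℝ≥0} (hε : 0 < ε) :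
    ∀ᶠ k in atTop, x k ≤ coordLimsup x + fun _ => ε := by
  simp only [Pi.le_def, eventually_all]
  exact fun i => (eventually_lt_of_limsup_lt (lt_add_of_pos_right _ hε) (hx i)).mono
    fun _ => le_of_lt

lemma coordLimsup_iterate_le_apply_add [Finite ι] {f : (ι → ℝ≥0) → ι → ℝ≥0} (hf : Monotone f)
    {s : ι → ℝ≥0} (hs : ∀ i, IsBoundedUnder (· ≤ ·) atTop fun k => f^[k] s i) {ε : ℝ≥0}
    (hε : 0 < ε) : coordLimsup (f^[·] s) ≤ f (coordLimsup (f^[·] s) + fun _ => ε) := by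
  have hstep : ∀ᶠ k in atTop, f^[k + 1] s ≤ f (coordLimsup (f^[·] s) + fun _ => ε) :=
    (eventually_le_coordLimsup_add hs hε).mono fun k hk => by
      rw [Function.iterate_succ_apply']
      exact hf hk
  intro i
  rw [coordLimsup, ← limsup_nat_add _ 1]
  exact limsup_le_of_le isCobounded_le_of_bot (hstep.mono fun k hk => hk i)

lemma le_apply_of_forall_pos_le_apply_add {f : (ι → ℝ≥0) → ι → ℝ≥0} (hf : Continuous f)
    {z : ι → ℝ≥0} (hz : ∀ ε : ℝ≥0, 0 < ε → z ≤ f (z + fun _ => ε)) : z ≤ f z := by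
  have hlim : Tendsto (fun ε : ℝ≥0 => f (z + fun _ => ε)) (𝓝[>] 0) (𝓝 (f z)) := by
    have : Continuous fun ε : ℝ≥0 => f (z + fun _ => ε) := by fun_prop
    rw [← congrArg f (add_zero z)]
    exact (this.tendsto 0).mono_left nhdsWithin_le_nhds
  exact ge_of_tendsto hlim (eventually_nhdsWithin_of_forall hz)

lemma tendsto_of_coordLimsup_eq_zero {x : ℕ → ι → ℝ≥0}
    (hx : ∀ i, IsBoundedUnder (· ≤ ·) atTop fun k => x k i) (h : coordLimsup x = 0) :
    Tendsto x atTop (𝓝 0) :=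
  tendsto_pi_nhds.2 fun i =>
    tendsto_of_le_liminf_of_limsup_le zero_le (congrFun h i).le (hx i)

theorem bounded_orbit_tendsto_zero_general (n : ℕ)
    (Γ : (Fin n → ℝ≥0) → (Fin n → ℝ≥0))
    (hcont : Continuous Γ)
    (hmono : Monotone Γ)
    (hsg : ∀ s : Fin n → ℝ≥0, s ≠ 0 → ¬ s ≤ Γ s)
    (s : Fin n → ℝ≥0)
    (hbdd : ∃ M : ℝ≥0, ∀ k : ℕ, 1 ≤ k → ∀ i, Γ^[k] s i ≤ M) :
    Filter.Tendsto (fun k : ℕ => Γ^[k] s) Filter.atTop (nhds 0) := by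
  obtain ⟨M, hM⟩ := hbdd
  have hs : ∀ i, IsBoundedUnder (· ≤ ·) atTop fun k => Γ^[k] s i := fun i =>
    isBoundedUnder_of_eventually_le (eventually_atTop.2 ⟨1, fun k hk => hM k hk i⟩)
  have hfix : coordLimsup (Γ^[·] s) ≤ Γ (coordLimsup (Γ^[·] s)) :=
    le_apply_of_forall_pos_le_apply_add hcont fun ε hε =>
      coordLimsup_iterate_le_apply_add hmono hs hε
  exact tendsto_of_coordLimsup_eq_zero hs (by_contra fun hne => hsg _ hne hfix)

/-- Step 3 of Proposition 8: for a continuous monotone operator `Γ` with `Γ(0) = 0`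
and `Γ(s) ≱ s` for all `s ≠ 0`, every bounded orbit of the iteration converges to `0`. -/
theorem bounded_orbit_tendsto_zero (n : ℕ)
    (Γ : (Fin n → ℝ≥0) → (Fin n → ℝ≥0))
    (hcont : Continuous Γ)
    (hmono : Monotone Γ)
    (h0 : Γ 0 = 0)
    (hsg : ∀ s : Fin n → ℝ≥0, s ≠ 0 → ¬ s ≤ Γ s)
    (s : Fin n → ℝ≥0)
    (hbdd : ∃ M : ℝ≥0, ∀ k : ℕ, 1 ≤ k → ∀ i, Γ^[k] s i ≤ M) :
    Filter.Tendsto (fun k : ℕ => Γ^[k] s) Filter.atTop (nhds 0) :=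
  bounded_orbit_tendsto_zero_general n Γ hcont hmono hsg s hbdd
end

section
/- There exists a monotone continuous map Γ : ℝ₊² → ℝ₊² with Γ(0) = 0 satisfying Γ(s) ≱ s for all s ∈ ℝ₊² \ {0}, together with a point s¹ ∈ ℝ₊², such that the iterates Γ^k(s¹) do not converge to 0 (indeed the first component of Γ^k(s¹) tends to +∞). In particular, for reducible monotone maps, the no-increase condition Γ(s) ≱ s for all s ≠ 0 does not imply global attractivity of 0 under iteration. -/
/-!
Take `Γ(s₀, s₁) = (γ₁(s₀) + s₁, γ₂(s₁))` with `γ₁(t) = t - e^{-t}` (truncated at `0`) and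
`γ₂(t) = t / √(1 + t²)`. Both `γᵢ` lie strictly below the identity off `0`, so `s ≤ Γ s` fails at
the last nonzero coordinate of `s`. Starting from `(1, 1)`, the second coordinate is
`(k + 1)^{-1/2}`, which is not summable, and it is fed into the first coordinate, where the loss
`e^{-x}` is at most `(4(k + 1))^{-1/2}` as long as `x ≥ √(k + 1)`; hence the first coordinate
stays above `√(k + 1)`.
-/

open scoped NNReal
open Filter Real

noncomputable section

def triangularMap (f h : ℝ≥0 → ℝ≥0) (s : Fin 2 → ℝ≥0) : Fin 2 → ℝ≥0 :=
  ![f (s 0) + s 1, h (s 1)]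

section triangularMap

variable {f h : ℝ≥0 → ℝ≥0}

@[simp]
lemma triangularMap_apply_zero (s : Fin 2 → ℝ≥0) : triangularMap f h s 0 = f (s 0) + s 1 := rfl

@[simp]
lemma triangularMap_apply_one (s : Fin 2 → ℝ≥0) : triangularMap f h s 1 = h (s 1) := rfl

lemma continuous_triangularMap (hf : Continuous f) (hh : Continuous h) :
    Continuous (triangularMap f h) := by
  refine continuous_pi fun i => ?_
  fin_cases i
  · exact (hf.comp (continuous_apply 0)).add (continuous_apply 1)
  · exact hh.comp (continuous_apply 1)

lemma monotone_triangularMap (hf : Monotone f) (hh : Monotone h) :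
    Monotone (triangularMap f h) := by
  intro s t hst i
  fin_cases i
  · exact add_le_add (hf (hst 0)) (hst 1)
  · exact hh (hst 1)

lemma triangularMap_zero (hf : f 0 = 0) (hh : h 0 = 0) : triangularMap f h 0 = 0 := by
  funext i
  fin_cases i <;> simp [hf, hh]

lemma not_le_triangularMap (hf : ∀ t, 0 < t → f t < t) (hh : ∀ t, 0 < t → h t < t)
    {s : Fin 2 → ℝ≥0} (hs : s ≠ 0) : ¬ s ≤ triangularMap f h s := by
  intro hle
  by_cases hs₁ : s 1 = 0
  · have hs₀ : s 0 ≠ 0 := fun hs₀ => hs (funext fun i => by fin_cases i <;> assumption)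
    have := hle 0
    rw [triangularMap_apply_zero, hs₁, add_zero] at this
    exact this.not_gt (hf _ (pos_iff_ne_zero.mpr hs₀))
  · exact (hle 1).not_gt (hh _ (pos_iff_ne_zero.mpr hs₁))

lemma iterate_triangularMap_apply_one (s : Fin 2 → ℝ≥0) (k : ℕ) :
    (triangularMap f h)^[k] s 1 = h^[k] (s 1) := by
  induction k with
  | zero => rfl
  | succ k ih => rw [Function.iterate_succ_apply', Function.iterate_succ_apply', ← ih]; rfl

lemma iterate_succ_triangularMap_apply_zero (s : Fin 2 → ℝ≥0) (k : ℕ) :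
    (triangularMap f h)^[k + 1] s 0 = f ((triangularMap f h)^[k] s 0) + h^[k] (s 1) := by
  rw [Function.iterate_succ_apply', triangularMap_apply_zero, iterate_triangularMap_apply_one]

end triangularMap

def subExpNeg (t : ℝ≥0) : ℝ≥0 := t - (exp (-t)).toNNReal

def divSqrtOneAddSq (t : ℝ≥0) : ℝ≥0 := t / NNReal.sqrt (1 + t ^ 2)

lemma monotone_subExpNeg : Monotone subExpNeg := fun _ _ hab =>
  tsub_le_tsub hab (Real.toNNReal_le_toNNReal (exp_le_exp.mpr (neg_le_neg hab)))

lemma continuous_subExpNeg : Continuous subExpNeg :=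
  continuous_id.sub
    (continuous_real_toNNReal.comp (continuous_exp.comp (continuous_neg.comp NNReal.continuous_coe)))

lemma subExpNeg_zero : subExpNeg 0 = 0 := by
  simp [subExpNeg]

lemma subExpNeg_lt {t : ℝ≥0} (ht : 0 < t) : subExpNeg t < t :=
  tsub_lt_self ht (Real.toNNReal_pos.mpr (exp_pos _))

lemma sub_exp_neg_le_subExpNeg (t : ℝ≥0) : (t : ℝ) - exp (-t) ≤ subExpNeg t := by
  have hexp : ((exp (-t)).toNNReal : ℝ) = exp (-t) := Real.coe_toNNReal _ (exp_pos _).le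
  have : (t : ℝ) ≤ subExpNeg t + (exp (-t)).toNNReal := by exact_mod_cast le_tsub_add
  linarith

lemma monotone_divSqrtOneAddSq : Monotone divSqrtOneAddSq := by
  intro a b hab
  rw [divSqrtOneAddSq, divSqrtOneAddSq, div_le_div_iff₀ (by positivity) (by positivity),
    ← NNReal.sqrt_sq a, ← NNReal.sqrt_sq b, ← NNReal.sqrt_mul, ← NNReal.sqrt_mul,
    NNReal.sqrt_le_sqrt, NNReal.sqrt_sq, NNReal.sqrt_sq]
  have hab₂ : a ^ 2 ≤ b ^ 2 := by gcongr
  calc a ^ 2 * (1 + b ^ 2) = a ^ 2 + a ^ 2 * b ^ 2 := by ring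
    _ ≤ b ^ 2 + a ^ 2 * b ^ 2 := by gcongr
    _ = b ^ 2 * (1 + a ^ 2) := by ring

lemma continuous_divSqrtOneAddSq : Continuous divSqrtOneAddSq :=
  continuous_id.div (NNReal.continuous_sqrt.comp (by fun_prop)) fun _ => by positivity

lemma divSqrtOneAddSq_zero : divSqrtOneAddSq 0 = 0 := by
  simp [divSqrtOneAddSq]

lemma divSqrtOneAddSq_lt {t : ℝ≥0} (ht : 0 < t) : divSqrtOneAddSq t < t :=
  div_lt_self ht (by simpa using NNReal.sqrt_lt_sqrt.mpr (lt_add_of_pos_right 1 (pow_pos ht 2)))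

lemma coe_divSqrtOneAddSq (t : ℝ≥0) : (divSqrtOneAddSq t : ℝ) = t / √(1 + t ^ 2) := by
  simp [divSqrtOneAddSq]

/-- `g(t)⁻² = t⁻² + 1` for `g = divSqrtOneAddSq`. -/
lemma iterate_divSqrtOneAddSq_one (k : ℕ) :
    ((divSqrtOneAddSq^[k] 1 : ℝ≥0) : ℝ) = (√(k + 1))⁻¹ := by
  induction k with
  | zero => simp
  | succ k ih =>
    have hk : (0 : ℝ) < k + 1 := by positivity
    rw [Function.iterate_succ_apply', coe_divSqrtOneAddSq, ih, inv_pow, sq_sqrt hk.le,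
      div_eq_mul_inv, ← mul_inv, ← sqrt_mul hk.le, mul_one_add, mul_inv_cancel₀ hk.ne']
    push_cast
    ring_nf

lemma two_mul_le_exp {a : ℝ} (ha : 0 ≤ a) : 2 * a ≤ exp a := by
  nlinarith [quadratic_le_exp_of_nonneg ha, sq_nonneg (a - 1)]

lemma sqrt_sq_add_one_le {a : ℝ} (ha : 0 < a) : √(a ^ 2 + 1) ≤ a + (2 * a)⁻¹ := by
  rw [sqrt_le_left (by positivity)]
  have : (a + (2 * a)⁻¹) ^ 2 = a ^ 2 + 1 + ((2 * a)⁻¹) ^ 2 := by field_simp; ring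
  nlinarith [sq_nonneg (2 * a)⁻¹]

lemma sqrt_sq_add_one_le_sub_exp_neg_add_inv {a x : ℝ} (ha : 0 < a) (hax : a ≤ x) :
    √(a ^ 2 + 1) ≤ x - exp (-x) + a⁻¹ := by
  have hloss : exp (-x) ≤ (2 * a)⁻¹ := calc
    exp (-x) ≤ exp (-a) := exp_le_exp.mpr (neg_le_neg hax)
    _ = (exp a)⁻¹ := exp_neg a
    _ ≤ (2 * a)⁻¹ := inv_anti₀ (by positivity) (two_mul_le_exp ha.le)
  have hinv : a⁻¹ = (2 * a)⁻¹ + (2 * a)⁻¹ := by field_simp; ring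
  linarith [sqrt_sq_add_one_le ha]

abbrev exampleMap : (Fin 2 → ℝ≥0) → (Fin 2 → ℝ≥0) := triangularMap subExpNeg divSqrtOneAddSq

lemma sqrt_succ_le_exampleMap_iterate_apply_zero (k : ℕ) :
    √(k + 1) ≤ exampleMap^[k] ![1, 1] 0 := by
  induction k with
  | zero => simp
  | succ k ih =>
    have hstep := sqrt_sq_add_one_le_sub_exp_neg_add_inv (by positivity) ih
    rw [sq_sqrt (by positivity)] at hstep
    rw [iterate_succ_triangularMap_apply_zero, NNReal.coe_add, Matrix.cons_val_one,
      Matrix.cons_val_zero, iterate_divSqrtOneAddSq_one]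
    push_cast
    linarith [sub_exp_neg_le_subExpNeg (exampleMap^[k] ![1, 1] 0)]

lemma tendsto_exampleMap_iterate_apply_zero :
    Tendsto (fun k : ℕ => exampleMap^[k] ![1, 1] 0) atTop atTop := by
  have hsqrt : Tendsto (fun k : ℕ => √(k + 1)) atTop atTop :=
    tendsto_sqrt_atTop.comp (tendsto_atTop_add_const_right _ 1 tendsto_natCast_atTop_atTop)
  rw [← NNReal.tendsto_coe_atTop]
  exact tendsto_atTop_mono sqrt_succ_le_exampleMap_iterate_apply_zero hsqrt

end

/-- Example 9 of the paper: there is a continuous monotone map `Γ : ℝ₊² → ℝ₊²` with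
`Γ(0) = 0` and `Γ(s) ≱ s` for all `s ≠ 0`, and a point `s¹` whose iterates do not
converge to `0`; in fact the first component of `Γ^k(s¹)` tends to `+∞`. -/
theorem exists_no_increase_but_iterates_not_attracted :
    ∃ Γ : (Fin 2 → ℝ≥0) → (Fin 2 → ℝ≥0),
      Continuous Γ ∧ Monotone Γ ∧ Γ 0 = 0 ∧
      (∀ s : Fin 2 → ℝ≥0, s ≠ 0 → ¬ s ≤ Γ s) ∧
      ∃ s₁ : Fin 2 → ℝ≥0,
        ¬ Filter.Tendsto (fun k : ℕ => Γ^[k] s₁) Filter.atTop (nhds 0) ∧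
        Filter.Tendsto (fun k : ℕ => Γ^[k] s₁ 0) Filter.atTop Filter.atTop := by
  refine ⟨exampleMap, continuous_triangularMap continuous_subExpNeg continuous_divSqrtOneAddSq,
    monotone_triangularMap monotone_subExpNeg monotone_divSqrtOneAddSq,
    triangularMap_zero subExpNeg_zero divSqrtOneAddSq_zero,
    fun s => not_le_triangularMap (fun _ => subExpNeg_lt) (fun _ => divSqrtOneAddSq_lt),
    ![1, 1], fun hzero => ?_, tendsto_exampleMap_iterate_apply_zero⟩
  exact not_tendsto_nhds_of_tendsto_atTop tendsto_exampleMap_iterate_apply_zero 0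
    (((continuous_apply 0).tendsto 0).comp hzero)
end

section
/- Under the hypotheses of the previous statement (Γ built from class-K gains γ_{ij}, γ_{ii} = 0, and Γ(s) ≱ s for all s ∈ ℝ₊ⁿ \ {0}), the intersection ⋂_{i=1}^n Ω_i of the sets Ω_i = { s ∈ ℝ₊ⁿ : s_i > Σ_{j≠i} γ_{ij}(s_j) } is nonempty. -/
open scoped NNReal

open scoped Topology
open Filter Set

/-! Induction on the dimension. For fixed `x ∈ ℝ₊ⁿ`, the greatest `t ≤ b` with
`t ≤ Γ(x, t)ₙ` depends monotonically and upper semicontinuously on `x`; substituting it for the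
last coordinate gives a map on `ℝ₊ⁿ` that still satisfies the small-gain condition near `0`. A
point where this reduced map strictly decreases every coordinate lifts to one for `Γ`, with last
coordinate slightly above that greatest sub-fixed point. The reduced map is in general only upper
semicontinuous and the small-gain condition survives only near `0`, so the induction is run for
monotone upper semicontinuous maps under a local hypothesis. -/

theorem Fin.snoc_le_snoc {n : ℕ} {α : Type*} [Preorder α] {x y : Fin n → α} {t u : α}
    (hxy : x ≤ y) (htu : t ≤ u) : (Fin.snoc x t : Fin (n + 1) → α) ≤ Fin.snoc y u :=
  (Fin.snocOrderIso fun _ => α).monotone (show (t, x) ≤ (u, y) from ⟨htu, hxy⟩)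

theorem Fin.snoc_eq_zero_iff {n : ℕ} {α : Type*} [Zero α] {x : Fin n → α} {t : α} :
    (Fin.snoc x t : Fin (n + 1) → α) = 0 ↔ x = 0 ∧ t = 0 := by
  refine ⟨fun h => ⟨funext fun j => by simpa using congrFun h j.castSucc,
    by simpa using congrFun h (Fin.last n)⟩, fun ⟨hx, ht⟩ => ?_⟩
  ext i
  induction i using Fin.lastCases <;> simp [hx, ht]

section Semicontinuity

variable {X α β : Type*} [TopologicalSpace X] [LinearOrder α] [TopologicalSpace α]
  [OrderTopology α]

theorem UpperSemicontinuousAt.tendsto_max_self {g : X → α} {x : X}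
    (hg : UpperSemicontinuousAt g x) : Tendsto (fun y => max (g y) (g x)) (𝓝 x) (𝓝 (g x)) := by
  refine tendsto_order.2 ⟨fun a ha => .of_forall fun y => ha.trans_le (le_max_right _ _),
    fun b hb => ?_⟩
  filter_upwards [hg b hb] with y hy using max_lt hy hb

/-- Monotonicity of `F` lets `g y` be replaced by `max (g y) (g x)`, which converges to `g x`. -/
theorem UpperSemicontinuous.comp_snoc [Preorder β] [TopologicalSpace β] {n : ℕ}
    {F : (Fin (n + 1) → α) → β} (hFu : UpperSemicontinuous F) (hF : Monotone F)
    {g : (Fin n → α) → α} (hg : UpperSemicontinuous g) :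
    UpperSemicontinuous fun x => F (Fin.snoc x (g x)) := by
  intro x c hc
  have hlim : Tendsto (fun y => (Fin.snoc y (max (g y) (g x)) : Fin (n + 1) → α)) (𝓝 x)
      (𝓝 (Fin.snoc x (g x))) :=
    tendsto_id.finSnoc (UpperSemicontinuousAt.tendsto_max_self (hg x))
  filter_upwards [hlim.eventually (hFu _ c hc)] with y hy
  exact (hF (Fin.snoc_le_snoc le_rfl (le_max_left _ _))).trans_lt hy

end Semicontinuity

section Iterate

variable {α : Type*} [ConditionallyCompleteLinearOrderBot α]

theorem le_iInf_iterate {f : α → α} (hf : Monotone f) {a t : α} (hta : t ≤ a) (htf : t ≤ f t) :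
    t ≤ ⨅ k, f^[k] a := by
  refine le_ciInf fun k => ?_
  induction k with
  | zero => exact hta
  | succ k ih => rw [Function.iterate_succ_apply']; exact htf.trans (hf ih)

theorem iInf_iterate_le_apply [TopologicalSpace α] [OrderTopology α] [NoMaxOrder α] {f : α → α}
    (hf : UpperSemicontinuous f) (a : α) : ⨅ k, f^[k] a ≤ f (⨅ k, f^[k] a) := by
  set L := ⨅ k, f^[k] a
  by_contra! hfL
  obtain ⟨b, hLb, hsub⟩ := exists_Ico_subset_of_mem_nhds (hf L L hfL) (exists_gt L)
  obtain ⟨k, hk⟩ := exists_lt_of_ciInf_lt hLb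
  have hstep : f (f^[k] a) < L := hsub ⟨ciInf_le (OrderBot.bddBelow _) k, hk⟩
  refine hstep.not_ge ?_
  rw [← Function.iterate_succ_apply' f]
  exact ciInf_le (OrderBot.bddBelow _) (k + 1)

end Iterate

section Elimination

variable {n : ℕ} (Γ : (Fin (n + 1) → ℝ≥0) → Fin (n + 1) → ℝ≥0) (b : ℝ≥0)

/-- The greatest `t ≤ b` with `t ≤ Γ (x, t)ₙ` (see `le_lastCoordFix`), reached by iterating
`t ↦ Γ (x, t)ₙ` from `b`. -/
noncomputable def lastCoordFix (x : Fin n → ℝ≥0) : ℝ≥0 :=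
  ⨅ k, (fun t => Γ (Fin.snoc x t) (Fin.last n))^[k] b

noncomputable def eliminateLast (x : Fin n → ℝ≥0) : Fin n → ℝ≥0 :=
  fun i => Γ (Fin.snoc x (lastCoordFix Γ b x)) i.castSucc

variable {Γ b}

theorem lastCoordFix_le (x : Fin n → ℝ≥0) : lastCoordFix Γ b x ≤ b :=
  ciInf_le (OrderBot.bddBelow _) 0

theorem le_lastCoordFix (hm : Monotone Γ) {x : Fin n → ℝ≥0} {t : ℝ≥0} (htb : t ≤ b)
    (ht : t ≤ Γ (Fin.snoc x t) (Fin.last n)) : t ≤ lastCoordFix Γ b x :=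
  le_iInf_iterate (fun _ _ h => hm (Fin.snoc_le_snoc le_rfl h) _) htb ht

theorem lastCoordFix_le_apply (hu : ∀ i, UpperSemicontinuous fun s => Γ s i)
    (x : Fin n → ℝ≥0) : lastCoordFix Γ b x ≤ Γ (Fin.snoc x (lastCoordFix Γ b x)) (Fin.last n) :=
  iInf_iterate_le_apply ((hu _).comp (continuous_const.finSnoc continuous_id)) b

theorem monotone_lastCoordFix (hm : Monotone Γ) : Monotone (lastCoordFix Γ b) := by
  intro x y hxy
  refine ciInf_mono (OrderBot.bddBelow _) fun k => ?_
  induction k with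
  | zero => exact le_rfl
  | succ k ih =>
    simp only [Function.iterate_succ_apply']
    exact hm (Fin.snoc_le_snoc hxy ih) _

theorem upperSemicontinuous_lastCoordFix (hm : Monotone Γ)
    (hu : ∀ i, UpperSemicontinuous fun s => Γ s i) :
    UpperSemicontinuous (lastCoordFix Γ b) := by
  refine upperSemicontinuous_ciInf (fun _ => OrderBot.bddBelow _) fun k => ?_
  induction k with
  | zero => exact upperSemicontinuous_const
  | succ k ih =>
    simp only [Function.iterate_succ_apply']
    exact (hu _).comp_snoc (fun _ _ h => hm h _) ih

theorem monotone_eliminateLast (hm : Monotone Γ) : Monotone (eliminateLast Γ b) :=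
  fun _ _ hxy _ => hm (Fin.snoc_le_snoc hxy (monotone_lastCoordFix hm hxy)) _

theorem upperSemicontinuous_eliminateLast (hm : Monotone Γ)
    (hu : ∀ i, UpperSemicontinuous fun s => Γ s i) (i : Fin n) :
    UpperSemicontinuous fun x => eliminateLast Γ b x i :=
  (hu _).comp_snoc (fun _ _ h => hm h _) (upperSemicontinuous_lastCoordFix hm hu)

theorem exists_eliminateLast_lt (hu : ∀ i, UpperSemicontinuous fun s => Γ s i)
    {x : Fin n → ℝ≥0}
    (hgain : ∃ i, Γ (Fin.snoc x (lastCoordFix Γ b x)) i <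
      (Fin.snoc x (lastCoordFix Γ b x) : Fin (n + 1) → ℝ≥0) i) :
    ∃ i, eliminateLast Γ b x i < x i := by
  obtain ⟨i, hi⟩ := hgain
  induction i using Fin.lastCases with
  | last => exact absurd (lastCoordFix_le_apply hu x) (by simpa using hi)
  | cast i => rw [Fin.snoc_castSucc] at hi; exact ⟨i, hi⟩

/-- Any `t` just above `lastCoordFix Γ b x` works: the last coordinate decreases since `t` is not
a sub-fixed point, the others by upper semicontinuity. -/
theorem exists_forall_snoc_lt (hm : Monotone Γ) (hu : ∀ i, UpperSemicontinuous fun s => Γ s i)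
    {x : Fin n → ℝ≥0} (hb : Γ (Fin.snoc x b) (Fin.last n) < b)
    (hx : ∀ i, eliminateLast Γ b x i < x i) :
    ∃ t ≤ b, ∀ i, Γ (Fin.snoc x t) i < (Fin.snoc x t : Fin (n + 1) → ℝ≥0) i := by
  set h := lastCoordFix Γ b x
  have hhb : h < b := (lastCoordFix_le x).lt_of_ne fun heq =>
    hb.not_ge (heq ▸ lastCoordFix_le_apply hu x)
  have hlast : ∀ t, h < t → t ≤ b → Γ (Fin.snoc x t) (Fin.last n) < t :=
    fun t hht htb => lt_of_not_ge fun ht => hht.not_ge (le_lastCoordFix hm htb ht)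
  have hinit : ∀ᶠ t in 𝓝 h, ∀ i : Fin n, Γ (Fin.snoc x t) i.castSucc < x i :=
    eventually_all.2 fun i =>
      (hu _).comp (continuous_const.finSnoc continuous_id) h _ (hx i)
  obtain ⟨t, hti, hht, htb⟩ :=
    ((eventually_nhdsWithin_of_eventually_nhds hinit).and (Ioc_mem_nhdsGT hhb)).exists
  refine ⟨t, htb, fun i => ?_⟩
  induction i using Fin.lastCases with
  | last => simpa using hlast t hht htb
  | cast i => simpa using hti i

end Elimination

theorem exists_pos_eventually_snoc_mem {n : ℕ} {U : Set (Fin (n + 1) → ℝ≥0)} (hU : U ∈ 𝓝 0) :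
    ∃ b > 0, ∀ᶠ x in 𝓝 (0 : Fin n → ℝ≥0), ∀ t ≤ b, Fin.snoc x t ∈ U := by
  have hcont : Tendsto (fun p : (Fin n → ℝ≥0) × ℝ≥0 => (Fin.snoc p.1 p.2 : Fin (n + 1) → ℝ≥0))
      (𝓝 0 ×ˢ 𝓝 0) (𝓝 0) := by
    have h := Tendsto.finSnoc (A := fun _ => ℝ≥0) (tendsto_fst (f := 𝓝 (0 : Fin n → ℝ≥0))
      (g := 𝓝 (0 : ℝ≥0))) tendsto_snd
    rwa [Fin.snoc_eq_zero_iff.2 ⟨rfl, rfl⟩] at h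
  obtain ⟨px, hpx, pt, hpt, hsub⟩ := eventually_prod_iff.1 (hcont hU)
  obtain ⟨c, hc0, hcsub⟩ := exists_Ico_subset_of_mem_nhds hpt (exists_gt 0)
  obtain ⟨b, hb0, hbc⟩ := exists_between hc0
  exact ⟨b, hb0, hpx.mono fun x hx t htb => hsub hx (hcsub ⟨zero_le, htb.trans_lt hbc⟩)⟩

theorem frequently_forall_lt_self {n : ℕ} (Γ : (Fin n → ℝ≥0) → Fin n → ℝ≥0) (hm : Monotone Γ)
    (hu : ∀ i, UpperSemicontinuous fun s => Γ s i)
    (hgain : ∀ᶠ s in 𝓝 0, s ≠ 0 → ∃ i, Γ s i < s i) :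
    ∃ᶠ s in 𝓝 0, ∀ i, Γ s i < s i := by
  induction n with
  | zero => exact .of_forall fun _ i => i.elim0
  | succ n ih =>
    refine frequently_iff.2 fun {U} hU => ?_
    obtain ⟨b, hb0, hbU⟩ := exists_pos_eventually_snoc_mem (inter_mem hU hgain)
    have hb : Γ (Fin.snoc (0 : Fin n → ℝ≥0) b) (Fin.last n) < b := by
      obtain ⟨i, hi⟩ := (hbU.self_of_nhds b le_rfl).2 fun h =>
        hb0.ne' (Fin.snoc_eq_zero_iff.1 h).2
      induction i using Fin.lastCases with
      | last => simpa using hi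
      | cast i => simp at hi
    have hnear : ∀ᶠ x in 𝓝 0, Γ (Fin.snoc x b) (Fin.last n) < b :=
      (hu _).comp (continuous_id.finSnoc continuous_const) 0 _ hb
    have hG : ∀ᶠ x in 𝓝 0, x ≠ 0 → ∃ i, eliminateLast Γ b x i < x i := by
      filter_upwards [hbU] with x hx hx0
      exact exists_eliminateLast_lt hu
        ((hx _ (lastCoordFix_le x)).2 fun h => hx0 (Fin.snoc_eq_zero_iff.1 h).1)
    obtain ⟨x, hxG, hxU, hxb⟩ := ((ih _ (monotone_eliminateLast hm)
      (upperSemicontinuous_eliminateLast hm hu) hG).and_eventually (hbU.and hnear)).exists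
    obtain ⟨t, htb, ht⟩ := exists_forall_snoc_lt hm hu hxb hxG
    exact ⟨_, (hxU t htb).1, ht⟩

theorem omega_intersection_nonempty_general (n : ℕ)
    (γ : Fin n → Fin n → (ℝ≥0 → ℝ≥0))
    (hγ : ∀ i j, ClassK (γ i j) ∨ γ i j = 0)
    (Γ : (Fin n → ℝ≥0) → (Fin n → ℝ≥0))
    (hΓ : ∀ s i, Γ s i = ∑ j ∈ Finset.univ.erase i, γ i j (s j))
    (hsg : ∀ s : Fin n → ℝ≥0, s ≠ 0 → ¬ s ≤ Γ s) :
    ∃ s : Fin n → ℝ≥0, ∀ i, ∑ j ∈ Finset.univ.erase i, γ i j (s j) < s i := by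
  have hγ' : ∀ i j, Continuous (γ i j) ∧ Monotone (γ i j) := fun i j =>
    (hγ i j).elim (fun h => ⟨h.1, h.2.1.monotone⟩) fun h =>
      h ▸ ⟨continuous_const, monotone_const⟩
  have hm : Monotone Γ := fun s t hst i => by
    simpa only [hΓ] using Finset.sum_le_sum fun j _ => (hγ' i j).2 (hst j)
  have hu : ∀ i, UpperSemicontinuous fun s => Γ s i := fun i => by
    simp only [hΓ]
    exact (continuous_finsetSum _ fun j _ =>
      (hγ' i j).1.comp (continuous_apply j)).upperSemicontinuous
  have hgain : ∀ s, s ≠ 0 → ∃ i, Γ s i < s i := fun s hs => by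
    simpa [Pi.le_def] using hsg s hs
  obtain ⟨s, hs⟩ := (frequently_forall_lt_self Γ hm hu (.of_forall hgain)).exists
  exact ⟨s, fun i => hΓ s i ▸ hs i⟩

/-- Second part of Proposition 13: if `Γ(s) ≱ s` for all `s ≠ 0`, then the sets
`Ω_i = {s : s_i > Σ_{j≠i} γ_ij(s_j)}` have a common point. -/
theorem omega_intersection_nonempty (n : ℕ)
    (γ : Fin n → Fin n → (ℝ≥0 → ℝ≥0))
    (hγ : ∀ i j, ClassK (γ i j) ∨ γ i j = 0)
    (hdiag : ∀ i, γ i i = 0)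
    (Γ : (Fin n → ℝ≥0) → (Fin n → ℝ≥0))
    (hΓ : ∀ s i, Γ s i = ∑ j ∈ Finset.univ.erase i, γ i j (s j))
    (hsg : ∀ s : Fin n → ℝ≥0, s ≠ 0 → ¬ s ≤ Γ s) :
    ∃ s : Fin n → ℝ≥0, ∀ i, ∑ j ∈ Finset.univ.erase i, γ i j (s j) < s i :=
  omega_intersection_nonempty_general n γ hγ Γ hΓ hsg
end

section
/- Let γ₁, γ₂ : ℝ₊ → ℝ₊ satisfy γᵢ(s) < s for all s > 0 (so γ₁∘γ₂(s) < s for all s > 0), yet there exist such γ's arising as ISS gains of two one-dimensional coupled systems ẋ₁ = −x₁ + x₂(1 − e^{−x₂}) + u, ẋ₂ = −x₂ + x₁(1 − e^{−x₁}) + u whose interconnection is not ISS: concretely, for every c > 0 the constant function x₁(t) = x₂(t) = c is a solution with constant input u = c·e^{−c}, and u → 0 as c → ∞ while the state stays at c. Hence the asymptotic gain property fails for the interconnection. -/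
/-- A real function of class `K∞` on the nonnegative half line: continuous, strictly
increasing, vanishing at `0`, unbounded. -/
def ClassKInfR (γ : ℝ → ℝ) : Prop :=
  ContinuousOn γ (Set.Ici 0) ∧ StrictMonoOn γ (Set.Ici 0) ∧ γ 0 = 0 ∧
    ∀ M : ℝ, ∃ r : ℝ, 0 ≤ r ∧ M < γ r

/-! The input `u = c e^{-c}` that holds the state at `c` stays in `[0, 1]`, so a monotone gain
evaluated at it is bounded by `γ 1`, while the state `c` it should dominate is arbitrary. -/

open Real

lemma mul_exp_neg_le_one (x : ℝ) : x * exp (-x) ≤ 1 :=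
  calc x * exp (-x) ≤ exp x * exp (-x) :=
        mul_le_mul_of_nonneg_right ((le_add_of_nonneg_right zero_le_one).trans (add_one_le_exp x))
          (exp_pos _).le
    _ = 1 := by rw [← exp_add, add_neg_cancel, exp_zero]

lemma not_forall_le_of_monotoneOn_of_bounded_input {γ u : ℝ → ℝ} {B : ℝ}
    (hγ : MonotoneOn γ (Set.Ici 0)) (hB : 0 ≤ B) (hu : ∀ c, 0 < c → 0 ≤ u c ∧ u c ≤ B) :
    ¬ ∀ c, 0 < c → c ≤ γ (u c) := by
  intro hgain
  set c := max 1 (γ B + 1)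
  have hc : 0 < c := zero_lt_one.trans_le (le_max_left _ _)
  have hγu : γ (u c) ≤ γ B := hγ (hu c hc).1 hB (hu c hc).2
  linarith [hgain c hc, le_max_right 1 (γ B + 1)]

/-- Example 12 of the paper: the feedback interconnection
`ẋ₁ = −x₁ + x₂(1 − e^{−x₂}) + u`, `ẋ₂ = −x₂ + x₁(1 − e^{−x₁}) + u`
admits, for every `c ≥ 0`, the constant solution `x₁ ≡ x₂ ≡ c` with constant input
`u ≡ c·e^{−c}`; and no class `K∞` function `γ_AG` can satisfy
`c ≤ γ_AG(c·e^{−c})` for all `c > 0`, so the asymptotic gain property fails. -/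
theorem counterexample_interconnection_not_ISS :
    (∀ c : ℝ, 0 ≤ c → ∀ t : ℝ,
      HasDerivAt (fun _ : ℝ => c)
        (-c + c * (1 - Real.exp (-c)) + c * Real.exp (-c)) t ∧
      HasDerivAt (fun _ : ℝ => c)
        (-c + c * (1 - Real.exp (-c)) + c * Real.exp (-c)) t) ∧
    ¬ ∃ γAG : ℝ → ℝ, ClassKInfR γAG ∧
        ∀ c : ℝ, 0 < c → c ≤ γAG (c * Real.exp (-c)) := by
  refine ⟨fun c _ t => ?_, ?_⟩
  · have hequilibrium : -c + c * (1 - exp (-c)) + c * exp (-c) = 0 := by ring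
    rw [hequilibrium]
    exact ⟨hasDerivAt_const t c, hasDerivAt_const t c⟩
  · rintro ⟨γ, ⟨-, hmono, -, -⟩, hgain⟩
    exact not_forall_le_of_monotoneOn_of_bounded_input hmono.monotoneOn zero_le_one
      (fun c hc => ⟨mul_nonneg hc.le (exp_pos _).le, mul_exp_neg_le_one c⟩) hgain
end

section
/- Let A = diag(A₁,…,Aₙ) be block diagonal with each Aⱼ Hurwitz satisfying ‖e^{Aⱼt}‖ ≤ Mⱼ e^{−λⱼ t} for all t ≥ 0 (with Mⱼ, λⱼ > 0), and let Δ = (Δ_{jk}) be a block matrix with Δ_{jj} = 0. Set R = (‖Δ_{jk}‖) ∈ ℝ₊^{n×n} and D = diag(Mⱼ/λⱼ). If ρ(D·R) < 1, then the system ẋ = (A + Δ)x is globally asymptotically stable, i.e., A + Δ is a Hurwitz matrix. -/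
open NormedSpace

/-- Operator norm of a real matrix, acting between the sup-normed spaces `Fin m → ℝ`. -/
noncomputable def opNorm {m k : ℕ} (M : Matrix (Fin m) (Fin k) ℝ) : ℝ :=
  ‖LinearMap.toContinuousLinearMap (Matrix.mulVecLin M)‖

/-- A real square matrix is Hurwitz if all its complex eigenvalues have negative
real part. -/
def IsHurwitz {ι : Type*} [Fintype ι] [DecidableEq ι] (M : Matrix ι ι ℝ) : Prop :=
  ∀ μ ∈ spectrum ℂ (M.map Complex.ofReal), μ.re < 0

/-!
Suppose `A + Δ` has an eigenvalue `μ` with `Re μ ≥ 0` and eigenvector `v = (v₁, …, vₙ)`. Block by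
block, `(μ - Aⱼ) vⱼ = ∑ₖ Δⱼₖ vₖ`. Because `Re μ ≥ 0`, the semigroup `e^{t(Aⱼ - μ)}` still decays
like `Mⱼ e^{-λⱼ t}`, and its truncated Laplace transform `∫₀ᵀ e^{t(Aⱼ - μ)} dt` inverts `μ - Aⱼ`
up to the error `e^{T(Aⱼ - μ)} → 0`; this gives `|vⱼ| ≤ (Mⱼ/λⱼ) ∑ₖ ‖Δⱼₖ‖ |vₖ|`, that is
`ξ ≤ (D R) ξ` for the nonnegative vector `ξ = (|vⱼ|)ⱼ`. Iterating, `ξ ≤ (D R)ᵐ ξ`, and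
`(D R)ᵐ → 0` by Gelfand's formula since `ρ(D R) < 1`. Hence `v = 0`, a contradiction.
-/

open Filter Topology Matrix

section BanachAlgebra

variable {𝔸 : Type*} [NormedRing 𝔸] [NormedAlgebra ℂ 𝔸] [NormedAlgebra ℚ 𝔸] [CompleteSpace 𝔸]

theorem exp_ofReal_smul_sub_one (b : 𝔸) (T : ℝ) :
    exp ((T : ℂ) • b) - 1 = (∫ t in (0 : ℝ)..T, exp ((t : ℂ) • b)) * b := by
  have hderiv (t : ℝ) :
      HasDerivAt (fun s : ℝ => exp ((s : ℂ) • b)) (exp ((t : ℂ) • b) * b) t := by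
    have h := (hasDerivAt_exp_smul_const b (t : ℂ)).scomp t Complex.ofRealCLM.hasDerivAt
    simp only [Complex.ofRealCLM_apply, Complex.ofReal_one, one_smul] at h
    exact h
  have hcont : Continuous fun t : ℝ => exp ((t : ℂ) • b) :=
    exp_continuous.comp (Complex.continuous_ofReal.smul continuous_const)
  have hint := hcont.intervalIntegrable (μ := MeasureTheory.volume) 0 T
  have hmul : (∫ t in (0 : ℝ)..T, exp ((t : ℂ) • b)) * b =
      ∫ t in (0 : ℝ)..T, exp ((t : ℂ) • b) * b :=
    (((ContinuousLinearMap.mul ℂ 𝔸).flip b).intervalIntegral_comp_comm hint).symm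
  rw [hmul, intervalIntegral.integral_eq_sub_of_hasDerivAt (fun t _ => hderiv t)
    ((hcont.mul continuous_const).intervalIntegrable 0 T)]
  simp

theorem exp_ofReal_smul_sub_smul_one (a : 𝔸) (μ : ℂ) (t : ℝ) :
    exp ((t : ℂ) • (a - μ • 1)) = Complex.exp (-(t * μ)) • exp ((t : ℂ) • a) := by
  have hsplit : (t : ℂ) • (a - μ • 1) = (t : ℂ) • a + algebraMap ℂ 𝔸 (-(t * μ)) := by
    rw [Algebra.algebraMap_eq_smul_one, smul_sub, smul_smul, neg_smul, sub_eq_add_neg]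
  rw [hsplit, NormedSpace.exp_add_of_commute (Algebra.commutes _ _).symm, ← algebraMap_exp_comm,
    ← Algebra.commutes, ← Algebra.smul_def, Complex.exp_eq_exp_ℂ]

theorem norm_exp_ofReal_smul_sub_smul_one_le (a : 𝔸) {μ : ℂ} (hμ : 0 ≤ μ.re) {t : ℝ}
    (ht : 0 ≤ t) : ‖exp ((t : ℂ) • (a - μ • 1))‖ ≤ ‖exp ((t : ℂ) • a)‖ := by
  rw [exp_ofReal_smul_sub_smul_one, norm_smul, Complex.norm_exp]
  refine mul_le_of_le_one_left (norm_nonneg _) (Real.exp_le_one_iff.mpr ?_)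
  simpa using mul_nonneg ht hμ

end BanachAlgebra

theorem norm_intervalIntegral_le_of_norm_le_exp {E : Type*} [NormedAddCommGroup E]
    [NormedSpace ℝ E] {f : ℝ → E} {M lam T : ℝ} (hM : 0 ≤ M) (hlam : 0 < lam) (hT : 0 ≤ T)
    (hf : ∀ t, 0 ≤ t → ‖f t‖ ≤ M * Real.exp (-lam * t)) :
    ‖∫ t in (0 : ℝ)..T, f t‖ ≤ M / lam := by
  have hexp : ∫ t in (0 : ℝ)..T, M * Real.exp (-lam * t) =
      M / lam * (1 - Real.exp (-lam * T)) := by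
    rw [intervalIntegral.integral_const_mul, intervalIntegral.integral_comp_mul_left Real.exp
      (neg_ne_zero.mpr hlam.ne'), integral_exp, mul_zero, Real.exp_zero, smul_eq_mul]
    field_simp
    ring
  calc ‖∫ t in (0 : ℝ)..T, f t‖ ≤ ∫ t in (0 : ℝ)..T, M * Real.exp (-lam * t) :=
        intervalIntegral.norm_integral_le_of_norm_le hT
          (Eventually.of_forall fun t ht => hf t ht.1.le)
          (Continuous.intervalIntegrable (by fun_prop) _ _)
    _ ≤ M / lam := by
        rw [hexp]
        exact mul_le_of_le_one_right (div_nonneg hM hlam.le)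
          (sub_le_self _ (Real.exp_pos _).le)

theorem Matrix.exists_mulVec_eq_smul_of_mem_spectrum {ι K : Type*} [Fintype ι] [DecidableEq ι]
    [Field K] {A : Matrix ι ι K} {μ : K} (hμ : μ ∈ spectrum K A) :
    ∃ v ≠ 0, A *ᵥ v = μ • v := by
  rw [← spectrum_toLin', ← Module.End.hasEigenvalue_iff_mem_spectrum] at hμ
  obtain ⟨v, hv⟩ := hμ.exists_hasEigenvector
  exact ⟨v, hv.2, by simpa using hv.apply_eq_smul⟩

section Block

variable {o α : Type*} [Fintype o] {m : o → Type*} [∀ i, Fintype (m i)] [Ring α]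

theorem Matrix.mulVec_sigma_apply (Δ : Matrix (Σ i, m i) (Σ i, m i) α)
    (Δblk : ∀ j k, Matrix (m j) (m k) α) (hΔblk : ∀ j k p q, Δblk j k p q = Δ ⟨j, p⟩ ⟨k, q⟩)
    (v : (Σ i, m i) → α) (j : o) (p : m j) :
    (Δ *ᵥ v) ⟨j, p⟩ = ∑ k, (Δblk j k *ᵥ fun q => v ⟨k, q⟩) p := by
  simp [mulVec, dotProduct, Fintype.sum_sigma, hΔblk]

theorem Matrix.blockDiagonal'_mulVec_apply [DecidableEq o] (A : ∀ i, Matrix (m i) (m i) α)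
    (v : (Σ i, m i) → α) (j : o) (p : m j) :
    (blockDiagonal' A *ᵥ v) ⟨j, p⟩ = (A j *ᵥ fun q => v ⟨j, q⟩) p := by
  rw [mulVec_sigma_apply _ (fun j k => of fun p q => blockDiagonal' A ⟨j, p⟩ ⟨k, q⟩)
    (fun _ _ _ _ => rfl), Finset.sum_eq_single j]
  · simp [mulVec, dotProduct]
  · intro k _ hk
    simp [mulVec, dotProduct, blockDiagonal'_apply_ne A _ _ (Ne.symm hk)]
  · simp

theorem Matrix.smul_sub_mulVec_eq_sum_of_blockDiagonal'_add_mulVec_eq_smul [DecidableEq o]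
    (A : ∀ i, Matrix (m i) (m i) α) (Δ : Matrix (Σ i, m i) (Σ i, m i) α)
    (Δblk : ∀ j k, Matrix (m j) (m k) α) (hΔblk : ∀ j k p q, Δblk j k p q = Δ ⟨j, p⟩ ⟨k, q⟩)
    {μ : α} {v : (Σ i, m i) → α} (hv : (blockDiagonal' A + Δ) *ᵥ v = μ • v) (j : o) :
    (μ • fun p => v ⟨j, p⟩) - A j *ᵥ (fun p => v ⟨j, p⟩) =
      ∑ k, Δblk j k *ᵥ fun q => v ⟨k, q⟩ := by
  funext p
  have hp := congr_fun hv ⟨j, p⟩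
  rw [add_mulVec, Pi.add_apply, blockDiagonal'_mulVec_apply, mulVec_sigma_apply Δ Δblk hΔblk,
    Pi.smul_apply] at hp
  rw [Pi.sub_apply, Pi.smul_apply, Finset.sum_apply, ← hp, add_sub_cancel_left]

end Block

theorem tendsto_norm_pow_atTop_nhds_zero_of_spectralRadius_lt_one {𝔸 : Type*} [NormedRing 𝔸]
    [NormedAlgebra ℂ 𝔸] [CompleteSpace 𝔸] {a : 𝔸} (ha : spectralRadius ℂ a < 1) :
    Tendsto (fun m : ℕ => ‖a ^ m‖) atTop (𝓝 0) := by
  obtain ⟨r, hr, hr1⟩ := ENNReal.lt_iff_exists_nnreal_btwn.mp ha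
  have hgelfand := spectrum.pow_nnnorm_pow_one_div_tendsto_nhds_spectralRadius a
  have hpow : ∀ᶠ m : ℕ in atTop, ‖a ^ m‖ ≤ (r : ℝ) ^ m := by
    filter_upwards [hgelfand.eventually_lt_const hr, eventually_ge_atTop 1] with m hm hm1
    have hm0 : (m : ℝ) ≠ 0 := by positivity
    have h := ENNReal.rpow_lt_rpow hm (by positivity : (0 : ℝ) < m)
    rw [← ENNReal.rpow_mul, one_div_mul_cancel hm0, ENNReal.rpow_one, ENNReal.rpow_natCast,
      ← ENNReal.coe_pow, ENNReal.coe_lt_coe] at h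
    exact_mod_cast h.le
  exact squeeze_zero' (Eventually.of_forall fun m => norm_nonneg _) hpow
    (tendsto_pow_atTop_nhds_zero_of_lt_one r.2 (by exact_mod_cast hr1))

section OrderedSemiring

variable {ι α : Type*} [Fintype ι] [Semiring α] [PartialOrder α] [IsOrderedRing α]

theorem Matrix.mulVec_mono_of_nonneg_s15 {S : Matrix ι ι α} (hS : ∀ i j, 0 ≤ S i j) {x y : ι → α}
    (hxy : x ≤ y) : S *ᵥ x ≤ S *ᵥ y := fun i =>
  Finset.sum_le_sum fun j _ => mul_le_mul_of_nonneg_left (hxy j) (hS i j)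

theorem Matrix.le_pow_mulVec_of_le_mulVec_s15 [DecidableEq ι] {S : Matrix ι ι α}
    (hS : ∀ i j, 0 ≤ S i j) {ξ : ι → α} (hξ : ξ ≤ S *ᵥ ξ) (m : ℕ) : ξ ≤ (S ^ m) *ᵥ ξ := by
  induction m with
  | zero => simp
  | succ m ih =>
    calc ξ ≤ S *ᵥ ξ := hξ
      _ ≤ S *ᵥ ((S ^ m) *ᵥ ξ) := mulVec_mono_of_nonneg_s15 hS ih
      _ = (S ^ (m + 1)) *ᵥ ξ := by rw [mulVec_mulVec, pow_succ']

end OrderedSemiring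

section LinftyOpNorm

attribute [local instance] Matrix.linftyOpNormedAddCommGroup Matrix.linftyOpNormedSpace
  Matrix.linftyOpNormedRing Matrix.linftyOpNormedAlgebra

theorem opNorm_eq_norm {m k : ℕ} (B : Matrix (Fin m) (Fin k) ℝ) : opNorm B = ‖B‖ := by
  rw [opNorm, Matrix.linfty_opNorm_eq_opNorm]
  rfl

theorem Matrix.norm_map_ofReal {m n : Type*} [Fintype m] [Fintype n] (B : Matrix m n ℝ) :
    ‖B.map Complex.ofReal‖ = ‖B‖ := by
  simp only [← coe_nnnorm, linfty_opNNNorm_def, map_apply, ← Complex.nnnorm_real]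

theorem Matrix.exp_ofReal_smul_map_ofReal {ι : Type*} [Fintype ι] [DecidableEq ι]
    (A : Matrix ι ι ℝ) (t : ℝ) :
    exp ((t : ℂ) • A.map Complex.ofReal) = (exp (t • A)).map Complex.ofReal := by
  have hcont : Continuous (Complex.ofRealHom.mapMatrix : Matrix ι ι ℝ →+* Matrix ι ι ℂ) :=
    continuous_id.matrix_map Complex.continuous_ofReal
  have hsmul : Complex.ofRealHom.mapMatrix (t • A) = (t : ℂ) • A.map Complex.ofReal := by
    ext i j
    simp
  rw [← hsmul]
  exact (map_exp _ hcont _).symm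

theorem Matrix.norm_mulVec_map_ofReal_le {m k : ℕ} (B : Matrix (Fin m) (Fin k) ℝ)
    (w : Fin k → ℂ) : ‖B.map Complex.ofReal *ᵥ w‖ ≤ opNorm B * ‖w‖ := by
  rw [opNorm_eq_norm, ← norm_map_ofReal]
  exact linfty_opNorm_mulVec _ _

theorem Matrix.norm_le_div_mul_norm_smul_sub_mulVec {ι : Type*} [Fintype ι] [DecidableEq ι]
    {A : Matrix ι ι ℂ} {M lam : ℝ} (hlam : 0 < lam)
    (hA : ∀ t : ℝ, 0 ≤ t → ‖exp ((t : ℂ) • A)‖ ≤ M * Real.exp (-lam * t))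
    {μ : ℂ} (hμ : 0 ≤ μ.re) (v : ι → ℂ) : ‖v‖ ≤ M / lam * ‖μ • v - A *ᵥ v‖ := by
  have hM : 0 ≤ M := by simpa using (norm_nonneg _).trans (hA 0 le_rfl)
  set b := A - μ • 1
  set u := μ • v - A *ᵥ v
  have hb (t : ℝ) (ht : 0 ≤ t) : ‖exp ((t : ℂ) • b)‖ ≤ M * Real.exp (-lam * t) :=
    (norm_exp_ofReal_smul_sub_smul_one_le A hμ ht).trans (hA t ht)
  have hvariation (T : ℝ) :
      v = exp ((T : ℂ) • b) *ᵥ v + (∫ t in (0 : ℝ)..T, exp ((t : ℂ) • b)) *ᵥ u := by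
    have hbv : b *ᵥ v = -u := by
      simp only [b, u, sub_mulVec, smul_mulVec, one_mulVec, neg_sub]
    have hexp : (∫ t in (0 : ℝ)..T, exp ((t : ℂ) • b)) * b = exp ((T : ℂ) • b) - 1 :=
      (exp_ofReal_smul_sub_one b T).symm
    rw [← sub_neg_eq_add, ← mulVec_neg, ← hbv, mulVec_mulVec, ← sub_mulVec, hexp,
      sub_sub_cancel, one_mulVec]
  have hle (T : ℝ) (hT : 0 ≤ T) : ‖v‖ ≤ M * Real.exp (-lam * T) * ‖v‖ + M / lam * ‖u‖ := by
    calc ‖v‖ ≤ ‖exp ((T : ℂ) • b)‖ * ‖v‖ + ‖∫ t in (0 : ℝ)..T, exp ((t : ℂ) • b)‖ * ‖u‖ := by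
          conv_lhs => rw [hvariation T]
          exact (norm_add_le _ _).trans (add_le_add (linfty_opNorm_mulVec _ _)
            (linfty_opNorm_mulVec _ _))
      _ ≤ M * Real.exp (-lam * T) * ‖v‖ + M / lam * ‖u‖ := by
          gcongr
          · exact hb T hT
          · exact norm_intervalIntegral_le_of_norm_le_exp hM hlam hT hb
  have hlim : Tendsto (fun T => M * Real.exp (-lam * T) * ‖v‖ + M / lam * ‖u‖) atTop
      (𝓝 (M / lam * ‖u‖)) := by
    have hexp : Tendsto (fun T => Real.exp (-lam * T)) atTop (𝓝 0) :=
      Real.tendsto_exp_atBot.comp (tendsto_id.const_mul_atTop_of_neg (neg_lt_zero.mpr hlam))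
    simpa using ((hexp.const_mul M).mul_const ‖v‖).add_const (M / lam * ‖u‖)
  exact ge_of_tendsto hlim (eventually_atTop.mpr ⟨0, hle⟩)

theorem Matrix.norm_le_div_mul_norm_smul_sub_map_ofReal_mulVec {k : ℕ}
    {A : Matrix (Fin k) (Fin k) ℝ} {M lam : ℝ} (hlam : 0 < lam)
    (hA : ∀ t : ℝ, 0 ≤ t → opNorm (exp (t • A)) ≤ M * Real.exp (-lam * t))
    {μ : ℂ} (hμ : 0 ≤ μ.re) (v : Fin k → ℂ) :
    ‖v‖ ≤ M / lam * ‖μ • v - A.map Complex.ofReal *ᵥ v‖ :=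
  norm_le_div_mul_norm_smul_sub_mulVec hlam (fun t ht => by
    rw [exp_ofReal_smul_map_ofReal, norm_map_ofReal, ← opNorm_eq_norm]
    exact hA t ht) hμ v

theorem Matrix.eq_zero_of_le_mulVec_of_norm_spectrum_lt_one {ι : Type*} [Fintype ι]
    [DecidableEq ι] {S : Matrix ι ι ℝ} (hS : ∀ i j, 0 ≤ S i j)
    (hρ : ∀ μ ∈ spectrum ℂ (S.map Complex.ofReal), ‖μ‖ < 1)
    {ξ : ι → ℝ} (hξ0 : 0 ≤ ξ) (hξ : ξ ≤ S *ᵥ ξ) : ξ = 0 := by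
  cases isEmpty_or_nonempty ι
  · exact Subsingleton.elim _ _
  have hrad : spectralRadius ℂ (S.map Complex.ofReal) < 1 := by
    simpa using spectrum.spectralRadius_lt_of_forall_lt (r := 1) _
      fun z hz => by exact_mod_cast hρ z hz
  have hpow : Tendsto (fun m : ℕ => ‖S ^ m‖ * ‖ξ‖) atTop (𝓝 0) := by
    have hmap (m : ℕ) : S.map Complex.ofReal ^ m = (S ^ m).map Complex.ofReal :=
      (map_pow Complex.ofRealHom.mapMatrix S m).symm
    simpa only [hmap, norm_map_ofReal, zero_mul] using
      (tendsto_norm_pow_atTop_nhds_zero_of_spectralRadius_lt_one hrad).mul_const ‖ξ‖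
  refine le_antisymm (fun i => ge_of_tendsto hpow (Eventually.of_forall fun m => ?_)) hξ0
  calc ξ i ≤ ((S ^ m) *ᵥ ξ) i := le_pow_mulVec_of_le_mulVec_s15 hS hξ m i
    _ ≤ ‖(S ^ m) *ᵥ ξ‖ := (Real.le_norm_self _).trans (norm_le_pi_norm _ i)
    _ ≤ ‖S ^ m‖ * ‖ξ‖ := linfty_opNorm_mulVec _ _

end LinftyOpNorm

theorem nonneg_of_opNorm_exp_smul_le {k : ℕ} {A : Matrix (Fin k) (Fin k) ℝ} {M lam : ℝ}
    (hA : ∀ t : ℝ, 0 ≤ t → opNorm (exp (t • A)) ≤ M * Real.exp (-lam * t)) : 0 ≤ M := by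
  simpa using (norm_nonneg _).trans (hA 0 le_rfl)

theorem norm_block_le_of_mulVec_eq_smul {n : ℕ} {N : Fin n → ℕ}
    {A : ∀ j, Matrix (Fin (N j)) (Fin (N j)) ℝ} {M lam : Fin n → ℝ} (hlam : ∀ j, 0 < lam j)
    (hA : ∀ j, ∀ t : ℝ, 0 ≤ t → opNorm (exp (t • A j)) ≤ M j * Real.exp (-(lam j) * t))
    {Δ : Matrix ((j : Fin n) × Fin (N j)) ((j : Fin n) × Fin (N j)) ℝ}
    {Δblk : ∀ j k : Fin n, Matrix (Fin (N j)) (Fin (N k)) ℝ}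
    (hΔblk : ∀ j k p q, Δblk j k p q = Δ ⟨j, p⟩ ⟨k, q⟩) {μ : ℂ} (hμ : 0 ≤ μ.re)
    {v : (j : Fin n) × Fin (N j) → ℂ}
    (hv : (blockDiagonal' A + Δ).map Complex.ofReal *ᵥ v = μ • v) (j : Fin n) :
    ‖fun p => v ⟨j, p⟩‖ ≤ M j / lam j * ∑ k, opNorm (Δblk j k) * ‖fun q => v ⟨k, q⟩‖ := by
  rw [Matrix.map_add Complex.ofReal Complex.ofReal_add,
    blockDiagonal'_map _ _ Complex.ofReal_zero] at hv
  refine (norm_le_div_mul_norm_smul_sub_map_ofReal_mulVec (hlam j) (hA j) hμ _).trans ?_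
  rw [smul_sub_mulVec_eq_sum_of_blockDiagonal'_add_mulVec_eq_smul _ _
    (fun j k => (Δblk j k).map Complex.ofReal) (fun j k p q => by simp [hΔblk]) hv]
  exact mul_le_mul_of_nonneg_left
    ((norm_sum_le _ _).trans (Finset.sum_le_sum fun k _ => norm_mulVec_map_ofReal_le _ _))
    (div_nonneg (nonneg_of_opNorm_exp_smul_le (hA j)) (hlam j).le)

theorem linear_interconnection_stable_general (n : ℕ) (N : Fin n → ℕ)
    (A : ∀ j, Matrix (Fin (N j)) (Fin (N j)) ℝ)
    (M lam : Fin n → ℝ)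
    (hlam : ∀ j, 0 < lam j)
    (hA : ∀ j, ∀ t : ℝ, 0 ≤ t →
      opNorm (exp (t • A j)) ≤ M j * Real.exp (-(lam j) * t))
    (Δ : Matrix ((j : Fin n) × Fin (N j)) ((j : Fin n) × Fin (N j)) ℝ)
    (Δblk : ∀ j k : Fin n, Matrix (Fin (N j)) (Fin (N k)) ℝ)
    (hΔblk : ∀ j k p q, Δblk j k p q = Δ ⟨j, p⟩ ⟨k, q⟩)
    (R : Matrix (Fin n) (Fin n) ℝ)
    (hR : ∀ j k, R j k = opNorm (Δblk j k))
    (D : Matrix (Fin n) (Fin n) ℝ)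
    (hD : D = Matrix.diagonal fun j => M j / lam j)
    (hρ : ∀ μ ∈ spectrum ℂ ((D * R).map Complex.ofReal), ‖μ‖ < 1) :
    IsHurwitz (Matrix.blockDiagonal' A + Δ) := by
  intro μ hμ
  by_contra! hre
  obtain ⟨v, hv0, hv⟩ := exists_mulVec_eq_smul_of_mem_spectrum hμ
  set ξ : Fin n → ℝ := fun j => ‖fun p => v ⟨j, p⟩‖
  have hgain : ξ ≤ (D * R) *ᵥ ξ := fun j =>
    (norm_block_le_of_mulVec_eq_smul hlam hA hΔblk hre hv j).trans_eq <| by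
      simp only [ξ, hD, hR, mulVec, dotProduct, diagonal_mul, Finset.mul_sum, mul_assoc]
  have hDR : ∀ j k, 0 ≤ (D * R) j k := fun j k => by
    rw [hD, diagonal_mul, hR]
    exact mul_nonneg (div_nonneg (nonneg_of_opNorm_exp_smul_le (hA j)) (hlam j).le)
      (norm_nonneg _)
  have hξ : ξ = 0 :=
    eq_zero_of_le_mulVec_of_norm_spectrum_lt_one hDR hρ (fun j => norm_nonneg _) hgain
  exact hv0 (funext fun ⟨j, p⟩ =>
    norm_le_zero_iff.mp ((norm_le_pi_norm _ p).trans (congr_fun hξ j).le))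

/-- Corollary 14 of the paper: interconnection of exponentially stable linear
subsystems. If `ρ(D·R) < 1`, where `R` collects the interconnection operator norms
and `D = diag(Mⱼ/λⱼ)`, then `ẋ = (A + Δ)x` is globally asymptotically stable,
i.e. `A + Δ` is Hurwitz. -/
theorem linear_interconnection_stable (n : ℕ) (N : Fin n → ℕ)
    (A : ∀ j, Matrix (Fin (N j)) (Fin (N j)) ℝ)
    (M lam : Fin n → ℝ)
    (hM : ∀ j, 0 < M j) (hlam : ∀ j, 0 < lam j)
    (hA : ∀ j, ∀ t : ℝ, 0 ≤ t →
      opNorm (exp (t • A j)) ≤ M j * Real.exp (-(lam j) * t))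
    (Δ : Matrix ((j : Fin n) × Fin (N j)) ((j : Fin n) × Fin (N j)) ℝ)
    (Δblk : ∀ j k : Fin n, Matrix (Fin (N j)) (Fin (N k)) ℝ)
    (hΔblk : ∀ j k p q, Δblk j k p q = Δ ⟨j, p⟩ ⟨k, q⟩)
    (hΔdiag : ∀ j, Δblk j j = 0)
    (R : Matrix (Fin n) (Fin n) ℝ)
    (hR : ∀ j k, R j k = opNorm (Δblk j k))
    (D : Matrix (Fin n) (Fin n) ℝ)
    (hD : D = Matrix.diagonal fun j => M j / lam j)
    (hρ : ∀ μ ∈ spectrum ℂ ((D * R).map Complex.ofReal), ‖μ‖ < 1) :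
    IsHurwitz (Matrix.blockDiagonal' A + Δ) :=
  linear_interconnection_stable_general n N A M lam hlam hA Δ Δblk hΔblk R hR D hD hρ
end

section
/- Let β₁,…,βₙ be class-KL functions, γ_{ij} class-K or zero with γ_{ii}=0, γ ∈ K, and suppose functions x₁,…,xₙ : ℝ₊ → ℝ₊ are continuous, bounded, and satisfy for all i and all t ≥ 0 the shifted estimate x_i(t) ≤ β_i(S, t/2) + Σ_{j≠i} γ_{ij}(sup_{τ ≥ t/2} x_j(τ)) + γ(u₀), where S, u₀ ≥ 0 are constants. Then the vector l with l_i = limsup_{t→∞} x_i(t) satisfies (Id − Γ)(l) ≤ γⁿ(u₀) componentwise, where Γ(s)_i = Σ_{j≠i} γ_{ij}(s_j) and γⁿ(u₀) is the constant vector with entries γ(u₀). -/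
/-- A real function of class `K` on the nonnegative half line. -/
def ClassKR (γ : ℝ → ℝ) : Prop :=
  ContinuousOn γ (Set.Ici 0) ∧ StrictMonoOn γ (Set.Ici 0) ∧ γ 0 = 0 ∧
    Set.MapsTo γ (Set.Ici 0) (Set.Ici 0)

/-- A function of class `KL`. -/
def ClassKLR (β : ℝ → ℝ → ℝ) : Prop :=
  (∀ t : ℝ, 0 ≤ t → ClassKR fun r => β r t) ∧
  (∀ r : ℝ, 0 ≤ r → AntitoneOn (fun t => β r t) (Set.Ici 0) ∧
    Filter.Tendsto (fun t => β r t) Filter.atTop (nhds 0))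

/-! The tail suprema `sup_{τ ≥ t/2} x_j(τ)` decrease to `l_j`, so by continuity of the gains
and `β_i(S, t/2) → 0` the right-hand side of the shifted estimate tends to
`Σ_{j ≠ i} γ_{ij}(l_j) + γ(u₀)`, which therefore bounds `l_i = limsup x_i`. -/

open Filter Set Topology

theorem tendsto_sSup_image_Ici_atTop_limsup {α β : Type*} [SemilatticeSup α] [Nonempty α]
    [ConditionallyCompleteLinearOrder β] [TopologicalSpace β] [OrderTopology β]
    [DenselyOrdered β] {f : α → β} (hf : BddAbove (range f)) (hf' : BddBelow (range f)) :
    Tendsto (fun t => sSup (f '' Ici t)) atTop (𝓝 (limsup f atTop)) := by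
  have hbdd_tail : ∀ t, BddAbove (f '' Ici t) := fun t => hf.mono (image_subset_range _ _)
  refine tendsto_order.2 ⟨fun c hc => Eventually.of_forall fun t => hc.trans_le ?_, fun c hc => ?_⟩
  · exact limsup_le_of_le hf'.isBoundedUnder_of_range.isCoboundedUnder_le <|
      (eventually_ge_atTop t).mono fun a ha => le_csSup (hbdd_tail t) (mem_image_of_mem f ha)
  · obtain ⟨c', hlt, hc'⟩ := exists_between hc
    obtain ⟨T, hT⟩ := eventually_atTop.1 (eventually_lt_of_limsup_lt hlt hf.isBoundedUnder_of_range)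
    filter_upwards [eventually_ge_atTop T] with t ht
    refine (csSup_le (nonempty_Ici.image f) ?_).trans_lt hc'
    exact forall_mem_image.2 fun a ha => (hT a (ht.trans ha)).le

theorem continuousOn_Ici_of_classKR_or_eq_zero {g : ℝ → ℝ} (hg : ClassKR g ∨ g = 0) :
    ContinuousOn g (Ici 0) := by
  rcases hg with hK | rfl
  · exact hK.1
  · exact continuousOn_const

theorem limsup_satisfies_gain_inequality_general (n : ℕ)
    (β : Fin n → ℝ → ℝ → ℝ) (hβ : ∀ i, ClassKLR (β i))
    (γij : Fin n → Fin n → ℝ → ℝ)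
    (hγij : ∀ i j, ClassKR (γij i j) ∨ γij i j = 0)
    (γ : ℝ → ℝ)
    (x : Fin n → ℝ → ℝ)
    (hx_nonneg : ∀ i t, 0 ≤ x i t)
    (hx_bdd : ∃ M : ℝ, ∀ i t, x i t ≤ M)
    (S u₀ : ℝ) (hS : 0 ≤ S)
    (hest : ∀ i, ∀ t : ℝ, 0 ≤ t →
      x i t ≤ β i S (t / 2) +
        (∑ j ∈ Finset.univ.erase i, γij i j (sSup (x j '' Set.Ici (t / 2)))) + γ u₀)
    (l : Fin n → ℝ) (hl : ∀ i, l i = Filter.limsup (x i) Filter.atTop) :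
    ∀ i, l i - (∑ j ∈ Finset.univ.erase i, γij i j (l j)) ≤ γ u₀ := by
  intro i
  obtain ⟨M, hM⟩ := hx_bdd
  have htail : ∀ j, Tendsto (fun t => sSup (x j '' Ici (t / 2))) atTop (𝓝 (l j)) := fun j =>
    hl j ▸ (tendsto_sSup_image_Ici_atTop_limsup ⟨M, forall_mem_range.2 (hM j)⟩
      ⟨0, forall_mem_range.2 (hx_nonneg j)⟩).comp (tendsto_id.atTop_div_const two_pos)
  have htail_nonneg : ∀ j t, 0 ≤ sSup (x j '' Ici (t / 2)) := fun j t =>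
    Real.sSup_nonneg (forall_mem_image.2 fun τ _ => hx_nonneg j τ)
  have hl_nonneg : ∀ j, 0 ≤ l j := fun j => ge_of_tendsto' (htail j) (htail_nonneg j)
  have hbound : Tendsto (fun t => β i S (t / 2) +
      (∑ j ∈ Finset.univ.erase i, γij i j (sSup (x j '' Ici (t / 2)))) + γ u₀) atTop
      (𝓝 (0 + (∑ j ∈ Finset.univ.erase i, γij i j (l j)) + γ u₀)) := by
    refine (((hβ i).2 S hS).2.comp (tendsto_id.atTop_div_const two_pos)).add
      (tendsto_finsetSum _ fun j _ => ?_) |>.add tendsto_const_nhds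
    exact ((continuousOn_Ici_of_classKR_or_eq_zero (hγij i j)).continuousWithinAt
      (hl_nonneg j)).tendsto.comp <| tendsto_nhdsWithin_of_tendsto_nhds_of_eventually_within _
        (htail j) (Eventually.of_forall (htail_nonneg j))
  have hl_le : l i ≤ 0 + (∑ j ∈ Finset.univ.erase i, γij i j (l j)) + γ u₀ := by
    rw [hl i, ← hbound.limsup_eq]
    exact limsup_le_limsup ((eventually_ge_atTop 0).mono (hest i))
      (isCoboundedUnder_le_of_le atTop (hx_nonneg i)) hbound.isBoundedUnder_le
  linarith

/-- The limsup step in the proof of the main small-gain theorem: from the shifted ISS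
estimates, the vector `l` of upper limits satisfies `(Id − Γ)(l) ≤ γⁿ(u₀)`. -/
theorem limsup_satisfies_gain_inequality (n : ℕ)
    (β : Fin n → ℝ → ℝ → ℝ) (hβ : ∀ i, ClassKLR (β i))
    (γij : Fin n → Fin n → ℝ → ℝ)
    (hγij : ∀ i j, ClassKR (γij i j) ∨ γij i j = 0)
    (hdiag : ∀ i, γij i i = 0)
    (γ : ℝ → ℝ) (hγ : ClassKR γ)
    (x : Fin n → ℝ → ℝ)
    (hx_cont : ∀ i, Continuous (x i))
    (hx_nonneg : ∀ i t, 0 ≤ x i t)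
    (hx_bdd : ∃ M : ℝ, ∀ i t, x i t ≤ M)
    (S u₀ : ℝ) (hS : 0 ≤ S) (hu₀ : 0 ≤ u₀)
    (hest : ∀ i, ∀ t : ℝ, 0 ≤ t →
      x i t ≤ β i S (t / 2) +
        (∑ j ∈ Finset.univ.erase i, γij i j (sSup (x j '' Set.Ici (t / 2)))) + γ u₀)
    (l : Fin n → ℝ) (hl : ∀ i, l i = Filter.limsup (x i) Filter.atTop) :
    ∀ i, l i - (∑ j ∈ Finset.univ.erase i, γij i j (l j)) ≤ γ u₀ :=
  limsup_satisfies_gain_inequality_general n β hβ γij hγij γ x hx_nonneg hx_bdd S u₀ hS hest l hl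
end
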